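/- arXiv:2402.14507 — 6 statements merged into one kernel-verified Lean document; each statement's English description precedes it below -/
import Mathlib

section
/- Let G be a group with a normal subgroup H and a subgroup C such that H ∩ C = {1} and HC = G (so G is the internal semidirect product H ⋊ C). Assume that C is abelian and that C^{(N)}(H) ≤ γ₂(H) for some integer N ≥ 2. Then γ_{r_n}(G) ≤ γ_{n+1}(H) for all n ≥ 1, where r_n := 1 + n + (N − 1)·n(n+1)/2. -/
/-- Iterated commutator subgroups: `C⁽⁰⁾(H) = H`, `C⁽ⁿ⁺¹⁾(H) = ⁅C, C⁽ⁿ⁾(H)⁆`. -/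
def iterComm {G : Type*} [Group G] (C H : Subgroup G) : ℕ → Subgroup G
  | 0 => H
  | n + 1 => ⁅C, iterComm C H n⁆

/-- The lower central series of a subgroup `H` of `G`, viewed inside `G`:
`lcsIn H 0 = H = γ₁(H)` and `lcsIn H n = γ_{n+1}(H)`. -/
def lcsIn {G : Type*} [Group G] (H : Subgroup G) : ℕ → Subgroup G
  | 0 => H
  | n + 1 => ⁅H, lcsIn H n⁆

namespace SemidirectAux

open Subgroup
open scoped commutatorElement

variable {G : Type*} [Group G]

theorem commute_of_commutator_eq_bot {A B : Subgroup G} (h : ⁅A, B⁆ = ⊥)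
    {a b : G} (ha : a ∈ A) (hb : b ∈ B) : a * b = b * a := by
  have h2 := Subgroup.commutator_mem_commutator ha hb
  rw [h, Subgroup.mem_bot] at h2
  exact commutatorElement_eq_one_iff_mul_comm.mp h2

theorem three_subgroups {A B K T : Subgroup G} [T.Normal]
    (h1 : ⁅⁅B, K⁆, A⁆ ≤ T) (h2 : ⁅⁅K, A⁆, B⁆ ≤ T) : ⁅⁅A, B⁆, K⁆ ≤ T := by
  have hker : (QuotientGroup.mk' T).ker = T := QuotientGroup.ker_mk' T
  rw [← hker, ← Subgroup.map_eq_bot_iff] at h1 h2 ⊢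
  rw [Subgroup.map_commutator, Subgroup.map_commutator] at h1 h2 ⊢
  exact Subgroup.commutator_commutator_eq_bot_of_rotate h1 h2

section Basic

variable (H C : Subgroup G)

theorem lcsIn_zero : lcsIn H 0 = H := rfl
theorem lcsIn_succ (n : ℕ) : lcsIn H (n + 1) = ⁅H, lcsIn H n⁆ := rfl
theorem iterComm_zero (K : Subgroup G) : iterComm C K 0 = K := rfl
theorem iterComm_succ (K : Subgroup G) (n : ℕ) :
    iterComm C K (n + 1) = ⁅C, iterComm C K n⁆ := rfl

theorem lcsIn_normal [H.Normal] : ∀ n, (lcsIn H n).Normal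
  | 0 => ‹H.Normal›
  | n + 1 => by
      haveI := lcsIn_normal n
      rw [lcsIn_succ]
      infer_instance

theorem lcsIn_le_self [H.Normal] : ∀ n, lcsIn H n ≤ H
  | 0 => le_rfl
  | n + 1 => by rw [lcsIn_succ]; exact Subgroup.commutator_le_left H _

theorem lcsIn_map {G' : Type*} [Group G'] (f : G →* G') :
    ∀ n, Subgroup.map f (lcsIn H n) = lcsIn (Subgroup.map f H) n
  | 0 => rfl
  | n + 1 => by
      rw [lcsIn_succ, lcsIn_succ, Subgroup.map_commutator, lcsIn_map f n]

theorem iterComm_map {G' : Type*} [Group G'] (K : Subgroup G) (f : G →* G') :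
    ∀ n, Subgroup.map f (iterComm C K n) =
      iterComm (Subgroup.map f C) (Subgroup.map f K) n
  | 0 => rfl
  | n + 1 => by
      rw [iterComm_succ, iterComm_succ, Subgroup.map_commutator, iterComm_map K f n]

theorem iterComm_le_self (K : Subgroup G) [hK : K.Normal] : ∀ n, iterComm C K n ≤ K
  | 0 => le_rfl
  | n + 1 => by
      rw [iterComm_succ]
      refine Subgroup.commutator_le.mpr fun c _ x hx => ?_
      have hx' : x ∈ K := iterComm_le_self K n hx
      have h1 : c * x * c⁻¹ ∈ K := hK.conj_mem x hx' c
      simpa [commutatorElement_def, mul_assoc] using K.mul_mem h1 (K.inv_mem hx')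

theorem iterComm_mono {K K' : Subgroup G} (h : K ≤ K') :
    ∀ n, iterComm C K n ≤ iterComm C K' n
  | 0 => h
  | n + 1 => Subgroup.commutator_mono le_rfl (iterComm_mono h n)

theorem iterComm_add (K : Subgroup G) (b : ℕ) :
    ∀ a, iterComm C K (b + a) = iterComm C (iterComm C K b) a
  | 0 => rfl
  | a + 1 => by
      rw [show b + (a + 1) = (b + a) + 1 from rfl, iterComm_succ, iterComm_succ,
        iterComm_add K b a]

theorem lcsIn_comm_le [H.Normal] (a : ℕ) :
    ∀ b, ⁅lcsIn H a, lcsIn H b⁆ ≤ lcsIn H (a + b + 1) := by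
  induction a with
  | zero =>
      intro b
      rw [show (0 : ℕ) + b + 1 = b + 1 by omega, lcsIn_succ, lcsIn_zero]
  | succ a ih =>
      intro b
      have key : ⁅⁅H, lcsIn H a⁆, lcsIn H b⁆ ≤ lcsIn H (a + b + 2) := by
        haveI := lcsIn_normal H (a + b + 2)
        apply three_subgroups
        · calc ⁅⁅lcsIn H a, lcsIn H b⁆, H⁆ = ⁅H, ⁅lcsIn H a, lcsIn H b⁆⁆ :=
                Subgroup.commutator_comm _ _
          _ ≤ ⁅H, lcsIn H (a + b + 1)⁆ := Subgroup.commutator_mono le_rfl (ih b)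
          _ = lcsIn H (a + b + 2) := (lcsIn_succ H (a + b + 1)).symm
        · calc ⁅⁅lcsIn H b, H⁆, lcsIn H a⁆ = ⁅lcsIn H a, ⁅H, lcsIn H b⁆⁆ := by
                rw [Subgroup.commutator_comm (lcsIn H b) H,
                  Subgroup.commutator_comm _ (lcsIn H a)]
          _ = ⁅lcsIn H a, lcsIn H (b + 1)⁆ := by rw [lcsIn_succ]
          _ ≤ lcsIn H (a + (b + 1) + 1) := ih (b + 1)
          _ = lcsIn H (a + b + 2) := by rw [show a + (b + 1) + 1 = a + b + 2 by omega]
      rw [lcsIn_succ, show a + 1 + b + 1 = a + b + 2 by omega]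
      exact key

end Basic

section Chain

variable (H C : Subgroup G)

/-- One step of the lower-central-series chain, relative to `lcsIn H n`. -/
theorem chainStep [hH : H.Normal]
    (hgen : ∀ g : G, ∃ h ∈ H, ∃ c ∈ C, g = h * c) (n j : ℕ) :
    ⁅iterComm C (lcsIn H n) j ⊔ lcsIn H (n + 1), (⊤ : Subgroup G)⁆ ≤
      iterComm C (lcsIn H n) (j + 1) ⊔ lcsIn H (n + 1) := by
  haveI hKn : (lcsIn H n).Normal := lcsIn_normal H n
  haveI hKn1 : (lcsIn H (n + 1)).Normal := lcsIn_normal H (n + 1)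
  set Kn := lcsIn H n with hKndef
  set Kn1 := lcsIn H (n + 1) with hKn1def
  set I := iterComm C Kn j with hIdef
  set T := iterComm C Kn (j + 1) ⊔ Kn1 with hTdef
  have hIK : I ≤ Kn := iterComm_le_self C Kn j
  have hK1K : Kn1 ≤ Kn := by
    rw [hKn1def, lcsIn_succ]
    exact Subgroup.commutator_le_right H Kn
  have hTK : T ≤ Kn := sup_le (iterComm_le_self C Kn (j + 1)) hK1K
  -- conjugation by elements of H preserves T
  have hconj : ∀ w ∈ H, ∀ t ∈ T, w * t * w⁻¹ ∈ T := by
    intro w hw t ht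
    have h1 : ⁅w, t⁆ ∈ Kn1 := by
      rw [hKn1def, lcsIn_succ]
      exact Subgroup.commutator_mem_commutator hw (hTK ht)
    have e : w * t * w⁻¹ = ⁅w, t⁆ * t := by group
    rw [e]
    exact T.mul_mem (Subgroup.mem_sup_right h1) ht
  refine Subgroup.commutator_le.mpr fun x hx g _ => ?_
  have hsup : I ⊔ Kn1 = Subgroup.closure ((I : Set G) ∪ (Kn1 : Set G)) := by
    rw [Subgroup.closure_union, Subgroup.closure_eq, Subgroup.closure_eq]
  rw [hsup] at hx
  refine (Subgroup.closure_induction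
    (p := fun y _ => y ∈ Kn ∧ ∀ g : G, ⁅y, g⁆ ∈ T) ?_ ?_ ?_ ?_ hx).2 g
  · -- generators
    rintro y (hyI | hyK1)
    · refine ⟨hIK hyI, fun g => ?_⟩
      obtain ⟨h, hh, c, hc, rfl⟩ := hgen g
      have e : ⁅y, h * c⁆ = ⁅y, h⁆ * (h * ⁅y, c⁆ * h⁻¹) := by group
      have m1 : ⁅y, h⁆ ∈ Kn1 := by
        have := Subgroup.commutator_mem_commutator (hIK hyI) hh
        rw [Subgroup.commutator_comm] at this
        rw [hKn1def, lcsIn_succ]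
        exact this
      have m2 : ⁅y, c⁆ ∈ iterComm C Kn (j + 1) := by
        have h2 : ⁅c, y⁆ ∈ ⁅C, I⁆ := Subgroup.commutator_mem_commutator hc hyI
        have h3 : ⁅y, c⁆ = ⁅c, y⁆⁻¹ := (commutatorElement_inv c y).symm
        rw [h3, iterComm_succ, ← hIdef]
        exact inv_mem h2
      rw [e]
      exact T.mul_mem (Subgroup.mem_sup_right m1) (hconj h hh _ (Subgroup.mem_sup_left m2))
    · refine ⟨hK1K hyK1, fun g => ?_⟩
      have h2 : g * y⁻¹ * g⁻¹ ∈ Kn1 := hKn1.conj_mem _ (Kn1.inv_mem hyK1) g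
      have e : ⁅y, g⁆ = y * (g * y⁻¹ * g⁻¹) := by group
      rw [e]
      exact Subgroup.mem_sup_right (Kn1.mul_mem hyK1 h2)
  · exact ⟨Kn.one_mem, fun g => by
      rw [commutatorElement_one_left]; exact T.one_mem⟩
  · rintro x y hx' hy' ⟨hxK, hxT⟩ ⟨hyK, hyT⟩
    refine ⟨Kn.mul_mem hxK hyK, fun g => ?_⟩
    have e : ⁅x * y, g⁆ = (x * ⁅y, g⁆ * x⁻¹) * ⁅x, g⁆ := by group
    rw [e]
    exact T.mul_mem (hconj x (lcsIn_le_self H n hxK) _ (hyT g)) (hxT g)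
  · rintro x hx' ⟨hxK, hxT⟩
    refine ⟨Kn.inv_mem hxK, fun g => ?_⟩
    have e : ⁅x⁻¹, g⁆ = x⁻¹ * ⁅x, g⁆⁻¹ * x⁻¹⁻¹ := by group
    rw [e]
    exact hconj x⁻¹ (H.inv_mem (lcsIn_le_self H n hxK)) _ (T.inv_mem (hxT g))

/-- The abelianization step: `γ₂(G) ≤ ⁅C,H⁆ ⊔ ⁅H,H⁆`. -/
theorem base_abelianization [hH : H.Normal]
    (hgen : ∀ g : G, ∃ h ∈ H, ∃ c ∈ C, g = h * c)
    (hCab : ∀ x ∈ C, ∀ y ∈ C, x * y = y * x) :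
    (⊤ : Subgroup G).lowerCentralSeries 1 ≤ ⁅C, H⁆ ⊔ lcsIn H 1 := by
  set T : Subgroup G := ⁅C, H⁆ ⊔ lcsIn H 1 with hTdef
  have hCH : ⁅C, H⁆ ≤ H := Subgroup.commutator_le_right C H
  have hHH : lcsIn H 1 ≤ H := lcsIn_le_self H 1
  have hTH : T ≤ H := sup_le hCH hHH
  have hconjC : ∀ c ∈ C, ∀ t ∈ T, c * t * c⁻¹ ∈ T := by
    intro c hc t ht
    have h1 : ⁅c, t⁆ ∈ ⁅C, H⁆ := Subgroup.commutator_mem_commutator hc (hTH ht)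
    have e : c * t * c⁻¹ = ⁅c, t⁆ * t := by group
    rw [e]; exact T.mul_mem (Subgroup.mem_sup_left h1) ht
  have hconjH : ∀ h ∈ H, ∀ t ∈ T, h * t * h⁻¹ ∈ T := by
    intro h hh t ht
    have h1 : ⁅h, t⁆ ∈ lcsIn H 1 := by
      rw [lcsIn_succ, lcsIn_zero]
      exact Subgroup.commutator_mem_commutator hh (hTH ht)
    have e : h * t * h⁻¹ = ⁅h, t⁆ * t := by group
    rw [e]; exact T.mul_mem (Subgroup.mem_sup_right h1) ht
  haveI hTnormal : T.Normal := by
    constructor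
    intro t ht g
    obtain ⟨h, hh, c, hc, rfl⟩ := hgen g
    have e : h * c * t * (h * c)⁻¹ = h * (c * t * c⁻¹) * h⁻¹ := by group
    rw [e]
    exact hconjH h hh _ (hconjC c hc t ht)
  -- pass to the quotient G/T, which is abelian
  have hcomm : ∀ g₁ g₂ : G, ⁅g₁, g₂⁆ ∈ T := by
    have key : ∀ a b : G, (a ∈ H ∨ a ∈ C) → (b ∈ H ∨ b ∈ C) →
        Commute ((a : G ⧸ T)) ((b : G ⧸ T)) := by
      intro a b ha hb
      have mem_imp : ∀ x y : G, ⁅x, y⁆ ∈ T → Commute ((x : G ⧸ T)) ((y : G ⧸ T)) := by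
        intro x y hxy
        have : ((⁅x, y⁆ : G) : G ⧸ T) = 1 := (QuotientGroup.eq_one_iff _).mpr hxy
        rw [show ((⁅x, y⁆ : G) : G ⧸ T) = ⁅(x : G ⧸ T), (y : G ⧸ T)⁆ from rfl] at this
        exact commutatorElement_eq_one_iff_commute.mp this
      rcases ha with ha | ha <;> rcases hb with hb | hb
      · exact mem_imp a b (Subgroup.mem_sup_right (by
          rw [lcsIn_succ, lcsIn_zero]; exact Subgroup.commutator_mem_commutator ha hb))
      · exact (mem_imp b a (Subgroup.mem_sup_left (Subgroup.commutator_mem_commutator hb ha))).symm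
      · exact mem_imp a b (Subgroup.mem_sup_left (Subgroup.commutator_mem_commutator ha hb))
      · have : a * b = b * a := hCab a ha b hb
        have e : ((a : G ⧸ T)) * b = ((b : G ⧸ T)) * a := by
          rw [show ((a : G ⧸ T)) * b = ((a * b : G) : G ⧸ T) from rfl, this]; rfl
        exact e
    intro g₁ g₂
    obtain ⟨h₁, hh₁, c₁, hc₁, rfl⟩ := hgen g₁
    obtain ⟨h₂, hh₂, c₂, hc₂, rfl⟩ := hgen g₂
    have hcom : Commute (((h₁ * c₁ : G) : G ⧸ T)) (((h₂ * c₂ : G) : G ⧸ T)) := by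
      have e1 : ((h₁ * c₁ : G) : G ⧸ T) = ((h₁ : G) : G ⧸ T) * ((c₁ : G) : G ⧸ T) := rfl
      have e2 : ((h₂ * c₂ : G) : G ⧸ T) = ((h₂ : G) : G ⧸ T) * ((c₂ : G) : G ⧸ T) := rfl
      rw [e1, e2]
      exact Commute.mul_left
        (Commute.mul_right (key h₁ h₂ (Or.inl hh₁) (Or.inl hh₂))
          (key h₁ c₂ (Or.inl hh₁) (Or.inr hc₂)))
        (Commute.mul_right (key c₁ h₂ (Or.inr hc₁) (Or.inl hh₂))
          (key c₁ c₂ (Or.inr hc₁) (Or.inr hc₂)))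
    have : ((⁅h₁ * c₁, h₂ * c₂⁆ : G) : G ⧸ T) = 1 := by
      rw [show ((⁅h₁ * c₁, h₂ * c₂⁆ : G) : G ⧸ T)
        = ⁅((h₁ * c₁ : G) : G ⧸ T), ((h₂ * c₂ : G) : G ⧸ T)⁆ from rfl]
      exact hcom.commutator_eq
    exact (QuotientGroup.eq_one_iff _).mp this
  have : (⊤ : Subgroup G).lowerCentralSeries 1 = ⁅(⊤ : Subgroup G), ⊤⁆ := rfl
  rw [this]
  exact Subgroup.commutator_le.mpr fun g₁ _ g₂ _ => hcomm g₁ g₂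

end Chain

section LemA

variable (H C : Subgroup G)

theorem lemA [hH : H.Normal]
    (N : ℕ) (hN : 2 ≤ N) (hbase : iterComm C H N ≤ lcsIn H 1) :
    ∀ n, iterComm C (lcsIn H n) ((N - 1) * (n + 1) + 1) ≤ lcsIn H (n + 1) := by
  intro n
  induction n with
  | zero =>
      have e : (N - 1) * (0 + 1) + 1 = N := by omega
      rw [e, lcsIn_zero]
      exact hbase
  | succ n ih =>
      haveI hKnormal : (lcsIn H (n + 2)).Normal := lcsIn_normal H (n + 2)
      set π : G →* G ⧸ lcsIn H (n + 2) := QuotientGroup.mk' (lcsIn H (n + 2)) with hπ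
      have hsurj : Function.Surjective π := QuotientGroup.mk'_surjective _
      set HQ := Subgroup.map π H with hHQ
      set CQ := Subgroup.map π C with hCQ
      set Kn := Subgroup.map π (lcsIn H n) with hKn
      set Kn1 := Subgroup.map π (lcsIn H (n + 1)) with hKn1
      haveI : HQ.Normal := hH.map π hsurj
      haveI : Kn.Normal := (lcsIn_normal H n).map π hsurj
      haveI : Kn1.Normal := (lcsIn_normal H (n + 1)).map π hsurj
      have kerπ : π.ker = lcsIn H (n + 2) := QuotientGroup.ker_mk' _
      have hmapbot : ∀ S : Subgroup G, S ≤ lcsIn H (n + 2) → Subgroup.map π S = ⊥ :=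
        fun S hS => (Subgroup.map_eq_bot_iff _).mpr (by rw [kerπ]; exact hS)
      have f4 : ⁅HQ, Kn⁆ = Kn1 := by
        rw [hHQ, hKn, hKn1, ← Subgroup.map_commutator, ← lcsIn_succ]
      have f1 : ⁅HQ, Kn1⁆ = ⊥ := by
        rw [hHQ, hKn1, ← Subgroup.map_commutator]
        exact hmapbot _ (le_of_eq (lcsIn_succ H (n + 1)).symm)
      have f2 : ⁅Kn, Kn1⁆ = ⊥ := by
        rw [hKn, hKn1, ← Subgroup.map_commutator]
        exact hmapbot _ ((Subgroup.commutator_mono (lcsIn_le_self H n) le_rfl).trans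
          (le_of_eq (lcsIn_succ H (n + 1)).symm))
      have hKn1HQ : Kn1 ≤ HQ := by
        rw [hKn1, hHQ]; exact Subgroup.map_mono (lcsIn_le_self H (n + 1))
      have f3 : ⁅Kn1, Kn1⁆ = ⊥ :=
        le_bot_iff.mp ((Subgroup.commutator_mono hKn1HQ le_rfl).trans (le_of_eq f1))
      have cm1 : ∀ a ∈ HQ, ∀ b ∈ Kn1, a * b = b * a :=
        fun a ha b hb => commute_of_commutator_eq_bot f1 ha hb
      have cm2 : ∀ a ∈ Kn, ∀ b ∈ Kn1, a * b = b * a :=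
        fun a ha b hb => commute_of_commutator_eq_bot f2 ha hb
      have cm3 : ∀ a ∈ Kn1, ∀ b ∈ Kn1, a * b = b * a :=
        fun a ha b hb => commute_of_commutator_eq_bot f3 ha hb
      have hXH : ∀ a, iterComm CQ HQ a ≤ HQ := fun a => iterComm_le_self CQ HQ a
      have hYK : ∀ b, iterComm CQ Kn b ≤ Kn := fun b => iterComm_le_self CQ Kn b
      have hMK : ∀ a b, ⁅iterComm CQ HQ a, iterComm CQ Kn b⁆ ≤ Kn1 :=
        fun a b => (Subgroup.commutator_mono (hXH a) (hYK b)).trans (le_of_eq f4)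
      -- collapse in the first coordinate
      have colX : ∀ a b, N ≤ a → ⁅iterComm CQ HQ a, iterComm CQ Kn b⁆ = ⊥ := by
        have hXN : iterComm CQ HQ N ≤ Subgroup.map π (lcsIn H 1) := by
          calc iterComm CQ HQ N = Subgroup.map π (iterComm C H N) := by
                rw [hCQ, hHQ, iterComm_map]
          _ ≤ Subgroup.map π (lcsIn H 1) := Subgroup.map_mono hbase
        haveI : (Subgroup.map π (lcsIn H 1)).Normal := (lcsIn_normal H 1).map π hsurj
        intro a b ha
        obtain ⟨t, rfl⟩ := Nat.exists_eq_add_of_le ha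
        apply le_bot_iff.mp
        calc ⁅iterComm CQ HQ (N + t), iterComm CQ Kn b⁆
            ≤ ⁅Subgroup.map π (lcsIn H 1), Subgroup.map π (lcsIn H n)⁆ := by
              apply Subgroup.commutator_mono
              · rw [iterComm_add]
                exact (iterComm_mono CQ hXN t).trans (iterComm_le_self CQ _ t)
              · rw [← hKn]; exact hYK b
        _ = Subgroup.map π ⁅lcsIn H 1, lcsIn H n⁆ := (Subgroup.map_commutator _ _ _).symm
        _ = ⊥ := hmapbot _ ((lcsIn_comm_le H 1 n).trans
              (by rw [show 1 + n + 1 = n + 2 by omega]))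
      -- collapse in the second coordinate
      have colY : ∀ a b, (N - 1) * (n + 1) + 1 ≤ b →
          ⁅iterComm CQ HQ a, iterComm CQ Kn b⁆ = ⊥ := by
        have hYB : iterComm CQ Kn ((N - 1) * (n + 1) + 1) ≤ Kn1 := by
          calc iterComm CQ Kn ((N - 1) * (n + 1) + 1)
              = Subgroup.map π (iterComm C (lcsIn H n) ((N - 1) * (n + 1) + 1)) := by
                rw [hCQ, hKn, iterComm_map]
          _ ≤ Kn1 := by rw [hKn1]; exact Subgroup.map_mono ih
        intro a b hb
        obtain ⟨t, rfl⟩ := Nat.exists_eq_add_of_le hb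
        apply le_bot_iff.mp
        calc ⁅iterComm CQ HQ a, iterComm CQ Kn ((N - 1) * (n + 1) + 1 + t)⁆
            ≤ ⁅HQ, Kn1⁆ := by
              apply Subgroup.commutator_mono (hXH a)
              rw [iterComm_add]
              exact (iterComm_mono CQ hYB t).trans (iterComm_le_self CQ Kn1 t)
        _ = ⊥ := f1
      -- the Leibniz rule
      have lemLeib : ∀ a b : ℕ, ⁅CQ, ⁅iterComm CQ HQ a, iterComm CQ Kn b⁆⁆ ≤
          ⁅iterComm CQ HQ (a + 1), iterComm CQ Kn b⁆
            ⊔ ⁅iterComm CQ HQ a, iterComm CQ Kn (b + 1)⁆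
            ⊔ ⁅iterComm CQ HQ (a + 1), iterComm CQ Kn (b + 1)⁆ := by
        intro a b
        set T := ⁅iterComm CQ HQ (a + 1), iterComm CQ Kn b⁆
            ⊔ ⁅iterComm CQ HQ a, iterComm CQ Kn (b + 1)⁆
            ⊔ ⁅iterComm CQ HQ (a + 1), iterComm CQ Kn (b + 1)⁆ with hT
        have hTK : T ≤ Kn1 := sup_le (sup_le (hMK _ _) (hMK _ _)) (hMK _ _)
        have bl : ∀ h₁ ∈ HQ, ∀ h₂ ∈ HQ, ∀ k ∈ Kn, ⁅h₁ * h₂, k⁆ = ⁅h₁, k⁆ * ⁅h₂, k⁆ := by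
          intro h₁ hh₁ h₂ hh₂ k hk
          have m1 : ⁅h₁, k⁆ ∈ Kn1 := by
            rw [← f4]; exact Subgroup.commutator_mem_commutator hh₁ hk
          have m2 : ⁅h₂, k⁆ ∈ Kn1 := by
            rw [← f4]; exact Subgroup.commutator_mem_commutator hh₂ hk
          have e : ⁅h₁ * h₂, k⁆ = h₁ * ⁅h₂, k⁆ * h₁⁻¹ * ⁅h₁, k⁆ := by group
          have e2 : h₁ * ⁅h₂, k⁆ * h₁⁻¹ = ⁅h₂, k⁆ := by
            rw [cm1 h₁ hh₁ _ m2]; exact mul_inv_cancel_right _ _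
          rw [e, e2, cm3 _ m2 _ m1]
        have br : ∀ h ∈ HQ, ∀ k₁ ∈ Kn, ∀ k₂ ∈ Kn, ⁅h, k₁ * k₂⁆ = ⁅h, k₁⁆ * ⁅h, k₂⁆ := by
          intro h hh k₁ hk₁ k₂ hk₂
          have m2 : ⁅h, k₂⁆ ∈ Kn1 := by
            rw [← f4]; exact Subgroup.commutator_mem_commutator hh hk₂
          have e : ⁅h, k₁ * k₂⁆ = ⁅h, k₁⁆ * (k₁ * ⁅h, k₂⁆ * k₁⁻¹) := by group
          have e2 : k₁ * ⁅h, k₂⁆ * k₁⁻¹ = ⁅h, k₂⁆ := by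
            rw [cm2 k₁ hk₁ _ m2]; exact mul_inv_cancel_right _ _
          rw [e, e2]
        refine Subgroup.commutator_le.mpr fun c hc m hm => ?_
        rw [Subgroup.commutator_def] at hm
        refine (Subgroup.closure_induction
          (p := fun m _ => m ∈ Kn1 ∧ ∀ c' ∈ CQ, ⁅c', m⁆ ∈ T) ?_ ?_ ?_ ?_ hm).2 c hc
        · rintro x ⟨g₁, hg₁, g₂, hg₂, rfl⟩
          have hx : g₁ ∈ HQ := hXH a hg₁
          have hy : g₂ ∈ Kn := hYK b hg₂
          refine ⟨by rw [← f4]; exact Subgroup.commutator_mem_commutator hx hy, ?_⟩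
          intro c' hc'
          have hu : ⁅c', g₁⁆ ∈ iterComm CQ HQ (a + 1) :=
            Subgroup.commutator_mem_commutator hc' hg₁
          have hv : ⁅c', g₂⁆ ∈ iterComm CQ Kn (b + 1) :=
            Subgroup.commutator_mem_commutator hc' hg₂
          have huH : ⁅c', g₁⁆ ∈ HQ := hXH (a + 1) hu
          have hvK : ⁅c', g₂⁆ ∈ Kn := hYK (b + 1) hv
          have key : ⁅c', ⁅g₁, g₂⁆⁆ = ⁅⁅c', g₁⁆ * g₁, ⁅c', g₂⁆ * g₂⁆ * ⁅g₁, g₂⁆⁻¹ := by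
            have hcj : c' * ⁅g₁, g₂⁆ * c'⁻¹ = ⁅c' * g₁ * c'⁻¹, c' * g₂ * c'⁻¹⁆ :=
              conjugate_commutatorElement g₁ g₂ c'
            have hcx : c' * g₁ * c'⁻¹ = ⁅c', g₁⁆ * g₁ := by group
            have hcy : c' * g₂ * c'⁻¹ = ⁅c', g₂⁆ * g₂ := by group
            calc ⁅c', ⁅g₁, g₂⁆⁆ = (c' * ⁅g₁, g₂⁆ * c'⁻¹) * ⁅g₁, g₂⁆⁻¹ := by group
            _ = ⁅⁅c', g₁⁆ * g₁, ⁅c', g₂⁆ * g₂⁆ * ⁅g₁, g₂⁆⁻¹ := by rw [hcj, hcx, hcy]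
          rw [key, bl _ huH _ hx _ (Kn.mul_mem hvK hy), br _ huH _ hvK _ hy,
            br _ hx _ hvK _ hy]
          have e3 : ∀ A B C D : G ⧸ lcsIn H (n + 2), A * B * (C * D) * D⁻¹ = A * B * C := by
            intro A B C D; group
          rw [e3]
          exact T.mul_mem (T.mul_mem
            (Subgroup.mem_sup_right (Subgroup.commutator_mem_commutator hu hv))
            (Subgroup.mem_sup_left (Subgroup.mem_sup_left
              (Subgroup.commutator_mem_commutator hu hg₂))))
            (Subgroup.mem_sup_left (Subgroup.mem_sup_right
              (Subgroup.commutator_mem_commutator hg₁ hv)))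
        · exact ⟨Kn1.one_mem, fun c' _ => by
            rw [commutatorElement_one_right]; exact T.one_mem⟩
        · rintro x y hx' hy' ⟨hxK, hxT⟩ ⟨hyK, hyT⟩
          refine ⟨Kn1.mul_mem hxK hyK, fun c' hc' => ?_⟩
          have h2 : ⁅c', y⁆ ∈ Kn1 := hTK (hyT c' hc')
          have e : ⁅c', x * y⁆ = ⁅c', x⁆ * (x * ⁅c', y⁆ * x⁻¹) := by group
          have e2 : x * ⁅c', y⁆ * x⁻¹ = ⁅c', y⁆ := by
            rw [cm3 x hxK _ h2]; exact mul_inv_cancel_right _ _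
          rw [e, e2]; exact T.mul_mem (hxT c' hc') (hyT c' hc')
        · rintro x hx' ⟨hxK, hxT⟩
          refine ⟨Kn1.inv_mem hxK, fun c' hc' => ?_⟩
          have h2 : ⁅c', x⁆⁻¹ ∈ Kn1 := Kn1.inv_mem (hTK (hxT c' hc'))
          have e : ⁅c', x⁻¹⁆ = x⁻¹ * ⁅c', x⁆⁻¹ * x := by group
          have e2 : x⁻¹ * ⁅c', x⁆⁻¹ * x = ⁅c', x⁆⁻¹ := by
            rw [mul_assoc, (cm3 x hxK _ h2).symm, inv_mul_cancel_left]
          rw [e, e2]; exact T.inv_mem (hxT c' hc')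
      -- the pigeonhole chain
      have hstep : ∀ j, ⁅CQ, ⨆ p : {p : ℕ × ℕ // j ≤ p.1 + p.2},
            ⁅iterComm CQ HQ p.1.1, iterComm CQ Kn p.1.2⁆⁆ ≤
          ⨆ p : {p : ℕ × ℕ // j + 1 ≤ p.1 + p.2},
            ⁅iterComm CQ HQ p.1.1, iterComm CQ Kn p.1.2⁆ := by
        intro j
        have hFFK : (⨆ p : {p : ℕ × ℕ // j + 1 ≤ p.1 + p.2},
            ⁅iterComm CQ HQ p.1.1, iterComm CQ Kn p.1.2⁆) ≤ Kn1 :=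
          iSup_le fun p => hMK p.1.1 p.1.2
        refine Subgroup.commutator_le.mpr fun c hc m hm => ?_
        refine (Subgroup.iSup_induction _ (C := fun m => m ∈ Kn1 ∧ ∀ c' ∈ CQ,
          ⁅c', m⁆ ∈ ⨆ p : {p : ℕ × ℕ // j + 1 ≤ p.1 + p.2},
            ⁅iterComm CQ HQ p.1.1, iterComm CQ Kn p.1.2⁆) hm ?_ ?_ ?_).2 c hc
        · rintro ⟨⟨a, b⟩, hab⟩ x hx
          have hab' : j ≤ a + b := hab
          refine ⟨hMK a b hx, fun c' hc' => ?_⟩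
          have h1 : ⁅c', x⁆ ∈ ⁅CQ, ⁅iterComm CQ HQ a, iterComm CQ Kn b⁆⁆ :=
            Subgroup.commutator_mem_commutator hc' hx
          have h2 := lemLeib a b h1
          have mem1 : ⁅iterComm CQ HQ (a + 1), iterComm CQ Kn b⁆ ≤
              ⨆ p : {p : ℕ × ℕ // j + 1 ≤ p.1 + p.2},
                ⁅iterComm CQ HQ p.1.1, iterComm CQ Kn p.1.2⁆ :=
            le_iSup (fun p : {p : ℕ × ℕ // j + 1 ≤ p.1 + p.2} =>
              ⁅iterComm CQ HQ p.1.1, iterComm CQ Kn p.1.2⁆) ⟨(a + 1, b), by omega⟩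
          have mem2 : ⁅iterComm CQ HQ a, iterComm CQ Kn (b + 1)⁆ ≤
              ⨆ p : {p : ℕ × ℕ // j + 1 ≤ p.1 + p.2},
                ⁅iterComm CQ HQ p.1.1, iterComm CQ Kn p.1.2⁆ :=
            le_iSup (fun p : {p : ℕ × ℕ // j + 1 ≤ p.1 + p.2} =>
              ⁅iterComm CQ HQ p.1.1, iterComm CQ Kn p.1.2⁆) ⟨(a, b + 1), by omega⟩
          have mem3 : ⁅iterComm CQ HQ (a + 1), iterComm CQ Kn (b + 1)⁆ ≤
              ⨆ p : {p : ℕ × ℕ // j + 1 ≤ p.1 + p.2},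
                ⁅iterComm CQ HQ p.1.1, iterComm CQ Kn p.1.2⁆ :=
            le_iSup (fun p : {p : ℕ × ℕ // j + 1 ≤ p.1 + p.2} =>
              ⁅iterComm CQ HQ p.1.1, iterComm CQ Kn p.1.2⁆) ⟨(a + 1, b + 1), by omega⟩
          exact (sup_le (sup_le mem1 mem2) mem3) h2
        · exact ⟨Kn1.one_mem, fun c' _ => by
            rw [commutatorElement_one_right]; exact Subgroup.one_mem _⟩
        · rintro x y ⟨hxK, hxT⟩ ⟨hyK, hyT⟩
          refine ⟨Kn1.mul_mem hxK hyK, fun c' hc' => ?_⟩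
          have h2 : ⁅c', y⁆ ∈ Kn1 := hFFK (hyT c' hc')
          have e : ⁅c', x * y⁆ = ⁅c', x⁆ * (x * ⁅c', y⁆ * x⁻¹) := by group
          have e2 : x * ⁅c', y⁆ * x⁻¹ = ⁅c', y⁆ := by
            rw [cm3 x hxK _ h2]; exact mul_inv_cancel_right _ _
          rw [e, e2]
          exact Subgroup.mul_mem _ (hxT c' hc') (hyT c' hc')
      have hchain : ∀ j, iterComm CQ Kn1 j ≤
          ⨆ p : {p : ℕ × ℕ // j ≤ p.1 + p.2},
            ⁅iterComm CQ HQ p.1.1, iterComm CQ Kn p.1.2⁆ := by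
        intro j
        induction j with
        | zero =>
            rw [iterComm_zero]
            calc Kn1 = ⁅iterComm CQ HQ 0, iterComm CQ Kn 0⁆ := by
                  rw [iterComm_zero, iterComm_zero]; exact f4.symm
            _ ≤ _ := le_iSup (fun p : {p : ℕ × ℕ // 0 ≤ p.1 + p.2} =>
                  ⁅iterComm CQ HQ p.1.1, iterComm CQ Kn p.1.2⁆) ⟨(0, 0), by omega⟩
        | succ j ihj =>
            calc iterComm CQ Kn1 (j + 1) = ⁅CQ, iterComm CQ Kn1 j⁆ := iterComm_succ CQ Kn1 j
            _ ≤ ⁅CQ, ⨆ p : {p : ℕ × ℕ // j ≤ p.1 + p.2},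
                  ⁅iterComm CQ HQ p.1.1, iterComm CQ Kn p.1.2⁆⁆ :=
                Subgroup.commutator_mono le_rfl ihj
            _ ≤ _ := hstep j
      have hFFbot : (⨆ p : {p : ℕ × ℕ // (N - 1) + (N - 1) * (n + 1) + 1 ≤ p.1 + p.2},
          ⁅iterComm CQ HQ p.1.1, iterComm CQ Kn p.1.2⁆) = ⊥ := by
        apply le_bot_iff.mp
        apply iSup_le
        rintro ⟨⟨a, b⟩, hab⟩
        have hab' : (N - 1) + (N - 1) * (n + 1) + 1 ≤ a + b := hab
        have hcase : N ≤ a ∨ (N - 1) * (n + 1) + 1 ≤ b := by omega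
        rcases hcase with h | h
        · exact (colX a b h).le
        · exact (colY a b h).le
      have hfin : iterComm CQ Kn1 ((N - 1) + (N - 1) * (n + 1) + 1) = ⊥ :=
        le_bot_iff.mp ((hchain _).trans (le_of_eq hFFbot))
      have hexp : (N - 1) * (n + 1 + 1) + 1 = (N - 1) + (N - 1) * (n + 1) + 1 := by
        have h' : (N - 1) * (n + 1 + 1) = (N - 1) * (n + 1) + (N - 1) := by ring
        omega
      have hexp2 : Subgroup.map π (iterComm C (lcsIn H (n + 1)) ((N - 1) * (n + 1 + 1) + 1))
          = ⊥ := by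
        rw [iterComm_map, ← hCQ, ← hKn1, hexp]
        exact hfin
      exact ((Subgroup.map_eq_bot_iff _).mp hexp2).trans (le_of_eq kerπ)

end LemA

section Main

variable (H C : Subgroup G)

theorem main_aux [hH : H.Normal]
    (hgen : ∀ g : G, ∃ h ∈ H, ∃ c ∈ C, g = h * c)
    (hCab : ∀ x ∈ C, ∀ y ∈ C, x * y = y * x)
    (N : ℕ) (hN : 2 ≤ N) (hbase : iterComm C H N ≤ lcsIn H 1) :
    ∀ n, (⊤ : Subgroup G).lowerCentralSeries ((n + 1) + (N - 1) * ((n + 1) * (n + 2)) / 2)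
      ≤ lcsIn H (n + 1) := by
  have warith : ∀ m : ℕ, (m + (N - 1) * (m * (m + 1)) / 2) + ((N - 1) * (m + 1) + 1)
      = (m + 1) + (N - 1) * ((m + 1) * (m + 2)) / 2 := by
    intro m
    obtain ⟨t, ht⟩ := Nat.even_mul_succ_self m
    have h1 : (N - 1) * (m * (m + 1)) = 2 * ((N - 1) * t) := by rw [ht]; ring
    have h2 : (N - 1) * ((m + 1) * (m + 2)) = 2 * ((N - 1) * (t + (m + 1))) := by
      have e : (m + 1) * (m + 2) = m * (m + 1) + 2 * (m + 1) := by ring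
      rw [e, ht]; ring
    rw [h1, h2, Nat.mul_div_cancel_left _ (by norm_num : 0 < 2),
      Nat.mul_div_cancel_left _ (by norm_num : 0 < 2)]
    ring
  intro n
  induction n with
  | zero =>
      have hidx : (0 + 1) + (N - 1) * ((0 + 1) * (0 + 2)) / 2 = (N - 1) + 1 := by
        have e : (N - 1) * ((0 + 1) * (0 + 2)) = (N - 1) * 2 := by norm_num
        rw [e, Nat.mul_div_cancel _ (by norm_num : 0 < 2)]
        omega
      rw [hidx]
      have chain : ∀ j, (⊤ : Subgroup G).lowerCentralSeries (j + 1) ≤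
          iterComm C (lcsIn H 0) (j + 1) ⊔ lcsIn H 1 := by
        intro j
        induction j with
        | zero =>
            have h0 := base_abelianization H C hgen hCab
            have e : iterComm C (lcsIn H 0) (0 + 1) ⊔ lcsIn H 1 = ⁅C, H⁆ ⊔ lcsIn H 1 := by
              rw [iterComm_succ, iterComm_zero, lcsIn_zero]
            rw [show (0 : ℕ) + 1 = 1 from rfl, e]
            exact h0
        | succ j ihj =>
            have hlcs : (⊤ : Subgroup G).lowerCentralSeries (j + 1 + 1)
                = ⁅(⊤ : Subgroup G).lowerCentralSeries (j + 1), ⊤⁆ := rfl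
            rw [hlcs]
            exact (Subgroup.commutator_mono ihj le_rfl).trans (chainStep H C hgen 0 (j + 1))
      have hch := chain (N - 1)
      refine hch.trans (sup_le ?_ le_rfl)
      have e2 : (N - 1) + 1 = N := by omega
      rw [e2, lcsIn_zero]
      exact hbase
  | succ n ihn =>
      set W := (n + 1) + (N - 1) * ((n + 1) * (n + 2)) / 2 with hW
      have chain : ∀ j, (⊤ : Subgroup G).lowerCentralSeries (W + j) ≤
          iterComm C (lcsIn H (n + 1)) j ⊔ lcsIn H (n + 2) := by
        intro j
        induction j with
        | zero =>
            refine le_trans ihn ?_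
            rw [iterComm_zero]
            exact le_sup_left
        | succ j ihj =>
            have hlcs : (⊤ : Subgroup G).lowerCentralSeries (W + (j + 1))
                = ⁅(⊤ : Subgroup G).lowerCentralSeries (W + j), ⊤⁆ := rfl
            rw [hlcs]
            exact (Subgroup.commutator_mono ihj le_rfl).trans
              (chainStep H C hgen (n + 1) j)
      have hfin := (chain ((N - 1) * (n + 1 + 1) + 1)).trans
        (sup_le (lemA H C N hN hbase (n + 1)) le_rfl)
      have hw := warith (n + 1)
      rw [show (n + 1) * (n + 1 + 1) = (n + 1) * (n + 2) from rfl] at hw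
      have hidx : W + ((N - 1) * (n + 1 + 1) + 1)
          = (n + 1 + 1) + (N - 1) * ((n + 1 + 1) * (n + 1 + 2)) / 2 := by
        rw [hW]
        omega
      rw [← hidx]
      exact hfin

end Main

end SemidirectAux

/-- Let `G = H ⋊ C` be an internal semidirect product (with `H ⊴ G`,
`H ∩ C = 1`, `HC = G`), `C` abelian, and `C⁽ᴺ⁾(H) ≤ γ₂(H)` for some `N ≥ 2`. Then
`γ_{rₙ}(G) ≤ γ_{n+1}(H)` for all `n ≥ 1`, where `rₙ = 1 + n + (N-1)n(n+1)/2`.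
(Here `γ_k(G) = (⊤ : Subgroup G).lowerCentralSeries (k-1)` and `γ_{n+1}(H) = lcsIn H n`.) -/
theorem lowerCentralSeries_semidirect_le
    {G : Type*} [Group G] (H C : Subgroup G) [H.Normal]
    (hdisj : H ⊓ C = ⊥)
    (hgen : ∀ g : G, ∃ h ∈ H, ∃ c ∈ C, g = h * c)
    (hCab : ∀ x ∈ C, ∀ y ∈ C, x * y = y * x)
    (N : ℕ) (hN : 2 ≤ N)
    (hbase : iterComm C H N ≤ lcsIn H 1) :
    ∀ n : ℕ, 1 ≤ n →
      (⊤ : Subgroup G).lowerCentralSeries (1 + n + (N - 1) * (n * (n + 1)) / 2 - 1) ≤ lcsIn H n := by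
  intro n hn
  obtain ⟨m, rfl⟩ : ∃ m, n = m + 1 := ⟨n - 1, by omega⟩
  have key := SemidirectAux.main_aux H C hgen hCab N hN hbase m
  have hidx : 1 + (m + 1) + (N - 1) * ((m + 1) * (m + 1 + 1)) / 2 - 1
      = (m + 1) + (N - 1) * ((m + 1) * (m + 2)) / 2 := by
    rw [show (m + 1) * (m + 1 + 1) = (m + 1) * (m + 2) from rfl]
    omega
  rw [hidx]
  exact key
end

section
/- Let K be a subring of ℚ, let H be a group, let I be a set, and for each i ∈ I let x_i : (K, +) → H be a group homomorphism. Then for every n ≥ 1, all i₁, …, i_n ∈ I and all a₁, …, a_n ∈ K, the element [x_{i₁}(a₁), x_{i₂}(a₂), …, x_{i_n}(a_n)]] · ([x_{i₁}(a₁a₂⋯a_n), x_{i₂}(1), …, x_{i_n}(1)]])^{-1} belongs to γ_{n+1}(H). -/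
open scoped commutatorElement


/-- The commutator `[g, h] = g⁻¹h⁻¹gh`. -/
def pComm {G : Type*} [Group G] (g h : G) : G := g⁻¹ * h⁻¹ * g * h

/-- The right-nested iterated commutator `[g₁, g₂, …, gₙ]] = [g₁, [g₂, [⋯, gₙ]]]`. -/
def pNest {G : Type*} [Group G] : List G → G
  | [] => 1
  | [g] => g
  | g :: (h :: t) => pComm g (pNest (h :: t))

section GroupLemmas

variable {G : Type*} [Group G] {G' : Type*} [Group G']

lemma pNest_cons (g h : G) (t : List G) :
    pNest (g :: h :: t) = pComm g (pNest (h :: t)) := rfl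

lemma map_pComm (f : G →* G') (a b : G) : f (pComm a b) = pComm (f a) (f b) := by
  simp [pComm]

lemma map_pNest (f : G →* G') : ∀ l : List G, f (pNest l) = pNest (l.map f)
  | [] => by simp [pNest]
  | [g] => by simp [pNest]
  | g :: h :: t => by
      rw [pNest_cons, map_pComm, map_pNest f (h :: t), List.map_cons, List.map_cons,
        List.map_cons] at *
      rfl

lemma pComm_mem (g c : G) {m : ℕ} (hc : c ∈ (⊤ : Subgroup G).lowerCentralSeries m) :
    pComm g c ∈ (⊤ : Subgroup G).lowerCentralSeries (m + 1) := by
  have h1 : ⁅c⁻¹, g⁻¹⁆ ∈ ⁅(⊤ : Subgroup G).lowerCentralSeries m, (⊤ : Subgroup G)⁆ :=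
    Subgroup.commutator_mem_commutator (inv_mem hc) (Subgroup.mem_top _)
  have h2 : pComm g c = (⁅c⁻¹, g⁻¹⁆)⁻¹ := by
    simp [pComm, commutatorElement_def]; group
  rw [h2]
  exact inv_mem h1

lemma pComm_mem_left (c u : G) {m : ℕ} (hc : c ∈ (⊤ : Subgroup G).lowerCentralSeries m) :
    pComm c u ∈ (⊤ : Subgroup G).lowerCentralSeries (m + 1) := by
  have h1 : ⁅c⁻¹, u⁻¹⁆ ∈ ⁅(⊤ : Subgroup G).lowerCentralSeries m, (⊤ : Subgroup G)⁆ :=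
    Subgroup.commutator_mem_commutator (inv_mem hc) (Subgroup.mem_top _)
  have h2 : pComm c u = ⁅c⁻¹, u⁻¹⁆ := by
    simp [pComm, commutatorElement_def]
  rw [h2]
  exact h1

lemma pNest_mem : ∀ l : List G, pNest l ∈ (⊤ : Subgroup G).lowerCentralSeries (l.length - 1)
  | [] => one_mem _
  | [g] => by
      rw [show ([g] : List G).length - 1 = 0 from rfl, Subgroup.lowerCentralSeries_zero]
      exact Subgroup.mem_top _
  | g :: h :: t => by
      have h1 := pNest_mem (h :: t)
      simp only [List.length_cons, Nat.add_sub_cancel] at h1 ⊢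
      rw [pNest_cons]
      exact pComm_mem _ _ h1

lemma conj_of_commute {z w : G} (h : Commute z w) : z⁻¹ * w * z = w := by
  rw [mul_assoc, ← h.eq, inv_mul_cancel_left]

lemma pComm_of_commute {g z : G} (h : Commute g z) : pComm g z = 1 := by
  have h2 : z⁻¹ * g = g * z⁻¹ := (h.inv_right.symm).eq
  show g⁻¹ * z⁻¹ * g * z = 1
  rw [mul_assoc g⁻¹, h2]
  group

lemma pComm_mul_left (g₁ g₂ c : G) :
    pComm (g₁ * g₂) c = g₂⁻¹ * pComm g₁ c * g₂ * pComm g₂ c := by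
  simp only [pComm]; group

lemma pComm_mul_right (g p q : G) :
    pComm g (p * q) = pComm g q * (q⁻¹ * pComm g p * q) := by
  simp only [pComm]; group

lemma mul_pComm_eq_conj (w u : G) : w * pComm w u = u⁻¹ * w * u := by
  simp only [pComm]; group

lemma pComm_central_right {z : G} (hz : ∀ q, Commute z q) (g c : G) :
    pComm g (c * z) = pComm g c := by
  rw [pComm_mul_right, pComm_of_commute (hz g).symm, conj_of_commute (hz _)]
  simp

lemma pComm_central_left {z : G} (hz : ∀ q, Commute z q) (g c : G) :
    pComm g (z * c) = pComm g c := by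
  rw [(hz c).eq, pComm_central_right hz]

end GroupLemmas

/-- Any element of a subring of `ℚ` can be written `m • e` where `e` is an
"inverse denominator": `d • e = 1`. -/
lemma Subring.exists_decomp (K : Subring ℚ) (c : K) :
    ∃ (m : ℤ) (d : ℕ) (e : K), c = m • e ∧ (d : ℤ) • e = 1 := by
  have hred : Int.gcd (c : ℚ).num ((c : ℚ).den : ℤ) = 1 := by
    have h : Nat.gcd (c : ℚ).num.natAbs (c : ℚ).den = 1 := (c : ℚ).reduced
    show Nat.gcd ((c : ℚ).num.natAbs) (((c : ℚ).den : ℤ).natAbs) = 1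
    rw [Int.natAbs_natCast]
    exact h
  obtain ⟨u, v, huv⟩ := Int.isCoprime_iff_gcd_eq_one.mpr hred
  have hd0 : (((c : ℚ).den : ℚ)) ≠ 0 := by
    exact_mod_cast (c : ℚ).den_nz
  have hdq : (((c : ℚ).num : ℚ)) = (c : ℚ) * ((c : ℚ).den : ℚ) := by
    have h := (c : ℚ).num_div_den
    rw [div_eq_iff hd0] at h
    exact h
  have hcast : (u : ℚ) * ((c : ℚ).num : ℚ) + (v : ℚ) * ((c : ℚ).den : ℚ) = 1 := by
    exact_mod_cast huv
  have coeK : ∀ (z : ℤ) (p : K), ((z • p : K) : ℚ) = (z : ℚ) * (p : ℚ) := by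
    intro z p
    rw [zsmul_eq_mul]
    push_cast
    ring
  have g2 : (((c : ℚ).den : ℚ)) * ((u : ℚ) * (c : ℚ) + (v : ℚ)) = 1 := by
    linear_combination hcast - (u : ℚ) * hdq
  refine ⟨(c : ℚ).num, (c : ℚ).den, u • c + v • (1 : K), ?_, ?_⟩
  · apply Subtype.ext
    rw [coeK]
    push_cast [coeK]
    linear_combination (-((u : ℚ) * (c : ℚ) + (v : ℚ))) * hdq + (-(c : ℚ)) * g2
  · apply Subtype.ext
    rw [coeK]
    push_cast [coeK]
    linear_combination g2

/-- The key arithmetic fact: a biadditive map out of a subring of `ℚ`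
"collects scalars": `F a b = F (a * b) 1`. -/
lemma collect_biadd (K : Subring ℚ) {A : Type*} [CommGroup A] (F : K → K → A)
    (h1 : ∀ u u' v, F (u + u') v = F u v * F u' v)
    (h2 : ∀ u v v', F u (v + v') = F u v * F u v') (a b : K) :
    F a b = F (a * b) 1 := by
  have coeK : ∀ (z : ℤ) (p : K), ((z • p : K) : ℚ) = (z : ℚ) * (p : ℚ) := by
    intro z p
    rw [zsmul_eq_mul]
    push_cast
    ring
  have hs1 : ∀ (m : ℤ) (u v : K), F (m • u) v = F u v ^ m := by
    intro m u v
    have h := map_zsmul (AddMonoidHom.mk' (fun w => Additive.ofMul (F w v))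
      (fun p q => h1 p q v)) m u
    exact h
  have hs2 : ∀ (m : ℤ) (u v : K), F u (m • v) = F u v ^ m := by
    intro m u v
    have h := map_zsmul (AddMonoidHom.mk' (fun w => Additive.ofMul (F u w))
      (fun p q => h2 u p q)) m v
    exact h
  obtain ⟨m, d, e, hc, hde⟩ := K.exists_decomp a
  have hae : (a : ℚ) = (m : ℚ) * (e : ℚ) := by rw [hc, coeK]
  have hde' : (d : ℚ) * (e : ℚ) = 1 := by
    have h : (((d : ℤ) • e : K) : ℚ) = 1 := by rw [hde]; simp
    rw [coeK] at h
    push_cast at h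
    exact h
  have hmb : m • b = (d : ℤ) • (a * b) := by
    apply Subtype.ext
    rw [coeK, coeK]
    push_cast
    linear_combination (-(d : ℚ) * (b : ℚ)) * hae - (m : ℚ) * (b : ℚ) * hde'
  have step1 : F a b = F 1 (a * b) := by
    calc F a b = F (m • e) b := by rw [← hc]
      _ = F e b ^ m := hs1 m e b
      _ = F e (m • b) := (hs2 m e b).symm
      _ = F e ((d : ℤ) • (a * b)) := by rw [hmb]
      _ = F e (a * b) ^ (d : ℤ) := hs2 d e (a * b)
      _ = F ((d : ℤ) • e) (a * b) := (hs1 d e (a * b)).symm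
      _ = F 1 (a * b) := by rw [hde]
  obtain ⟨m', d', e', hc', hde2⟩ := K.exists_decomp (a * b)
  have hae' : (a : ℚ) * (b : ℚ) = (m' : ℚ) * (e' : ℚ) := by
    have h : ((a * b : K) : ℚ) = (m' : ℚ) * (e' : ℚ) := by rw [hc', coeK]
    push_cast at h
    exact h
  have hde2' : (d' : ℚ) * (e' : ℚ) = 1 := by
    have h : (((d' : ℤ) • e' : K) : ℚ) = 1 := by rw [hde2]; simp
    rw [coeK] at h
    push_cast at h
    exact h
  have hm1 : m' • (1 : K) = (d' : ℤ) • (a * b) := by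
    apply Subtype.ext
    rw [coeK, coeK]
    push_cast
    linear_combination (-(d' : ℚ)) * hae' - (m' : ℚ) * hde2'
  have step2 : F 1 (a * b) = F (a * b) 1 := by
    calc F 1 (a * b) = F 1 (m' • e') := by rw [← hc']
      _ = F 1 e' ^ m' := hs2 m' 1 e'
      _ = F (m' • (1 : K)) e' := (hs1 m' 1 e').symm
      _ = F ((d' : ℤ) • (a * b)) e' := by rw [hm1]
      _ = F (a * b) e' ^ (d' : ℤ) := hs1 d' (a * b) e'
      _ = F (a * b) ((d' : ℤ) • e') := (hs2 d' (a * b) e').symm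
      _ = F (a * b) 1 := by rw [hde2]
  rw [step1, step2]

section QuotientLemmas

lemma pNest_cons_ofFn {G : Type*} [Group G] {n : ℕ} (g : G) (f : Fin (n + 1) → G) :
    pNest (g :: List.ofFn f) = pComm g (pNest (List.ofFn f)) := by
  rw [List.ofFn_succ]
  rfl

lemma pNest_ofFn_succ {G : Type*} [Group G] {n : ℕ} (f : Fin (n + 2) → G) :
    pNest (List.ofFn f) = pComm (f 0) (pNest (List.ofFn fun k => f k.succ)) := by
  rw [List.ofFn_succ, pNest_cons_ofFn]

/-- Elements of `γ_{m+1}` become central in `G ⧸ γ_{m+2}`. -/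
lemma central_quot {G : Type*} [Group G] (m : ℕ) (w : G)
    (hw : w ∈ (⊤ : Subgroup G).lowerCentralSeries m) (q : G ⧸ (⊤ : Subgroup G).lowerCentralSeries (m + 1)) :
    Commute ((QuotientGroup.mk' ((⊤ : Subgroup G).lowerCentralSeries (m + 1))) w) q := by
  obtain ⟨h, rfl⟩ := QuotientGroup.mk'_surjective _ q
  rw [← commutatorElement_eq_one_iff_commute, ← map_commutatorElement]
  exact (QuotientGroup.eq_one_iff _).mpr
    (Subgroup.commutator_mem_commutator hw (Subgroup.mem_top _))

lemma pComm_congr_right {G : Type*} [Group G] {m : ℕ} (g : G) {c c' : G}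
    (h : c * c'⁻¹ ∈ (⊤ : Subgroup G).lowerCentralSeries m) :
    pComm g c * (pComm g c')⁻¹ ∈ (⊤ : Subgroup G).lowerCentralSeries (m + 1) := by
  have hsuf : (QuotientGroup.mk' ((⊤ : Subgroup G).lowerCentralSeries (m + 1))) (pComm g c) =
      (QuotientGroup.mk' ((⊤ : Subgroup G).lowerCentralSeries (m + 1))) (pComm g c') := by
    have hc : c = (c * c'⁻¹) * c' := by group
    rw [map_pComm, map_pComm, hc, map_mul]
    exact pComm_central_left (central_quot m _ h) _ _
  have h1 : (QuotientGroup.mk' ((⊤ : Subgroup G).lowerCentralSeries (m + 1)))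
      (pComm g c * (pComm g c')⁻¹) = 1 := by
    rw [map_mul, map_inv, hsuf, mul_inv_cancel]
  exact (QuotientGroup.eq_one_iff _).mp h1

/-- Splitting the head entry of a nested commutator: exact identity in `H`. -/
lemma cH_split (K : Subring ℚ) {H : Type*} [Group H] (p : ℕ)
    (y : Fin (p + 1) → (Multiplicative K →* H)) (v v' : K) :
    ∃ z ∈ (⊤ : Subgroup H).lowerCentralSeries (p + 1),
      pNest (List.ofFn fun k => y k (Multiplicative.ofAdd (if (k : ℕ) = 0 then v + v' else 1))) =
        pNest (List.ofFn fun k => y k (Multiplicative.ofAdd (if (k : ℕ) = 0 then v else 1))) * z *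
          pNest (List.ofFn fun k => y k (Multiplicative.ofAdd (if (k : ℕ) = 0 then v' else 1))) := by
  have hy : ∀ w w' : K, y 0 (Multiplicative.ofAdd (w + w')) =
      y 0 (Multiplicative.ofAdd w) * y 0 (Multiplicative.ofAdd w') := by
    intro w w'
    rw [ofAdd_add, map_mul]
  cases p with
  | zero =>
      refine ⟨1, one_mem _, ?_⟩
      have hl : ∀ w : K, pNest (List.ofFn fun k : Fin 1 =>
          y k (Multiplicative.ofAdd (if (k : ℕ) = 0 then w else 1))) =
          y 0 (Multiplicative.ofAdd w) := by
        intro w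
        simp [List.ofFn_succ, pNest]
      rw [hl, hl, hl, hy, mul_one]
  | succ r =>
      have hl : ∀ w : K, pNest (List.ofFn fun k : Fin (r + 2) =>
          y k (Multiplicative.ofAdd (if (k : ℕ) = 0 then w else 1))) =
          pComm (y 0 (Multiplicative.ofAdd w))
            (pNest (List.ofFn fun k : Fin (r + 1) =>
              y k.succ (Multiplicative.ofAdd (1 : K)))) := by
        intro w
        rw [List.ofFn_succ, pNest_cons_ofFn]
        simp [Fin.val_succ]
      refine ⟨pComm (pComm (y 0 (Multiplicative.ofAdd v))
          (pNest (List.ofFn fun k : Fin (r + 1) => y k.succ (Multiplicative.ofAdd (1 : K)))))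
          (y 0 (Multiplicative.ofAdd v')), ?_, ?_⟩
      · apply pComm_mem_left
        apply pComm_mem
        simpa using pNest_mem
          (List.ofFn fun k : Fin (r + 1) => y k.succ (Multiplicative.ofAdd (1 : K)))
      · rw [hl, hl, hl, hy, pComm_mul_left]
        simp only [pComm]
        group

open scoped IsMulCommutative in
/-- Head scalar collection modulo the next term of the lower central series. -/
lemma head_collect (K : Subring ℚ) {H : Type*} [Group H] (p : ℕ)
    (g : Multiplicative K →* H) (y : Fin (p + 1) → (Multiplicative K →* H)) (u v : K) :
    pComm (g (Multiplicative.ofAdd u))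
        (pNest (List.ofFn fun k => y k (Multiplicative.ofAdd (if (k : ℕ) = 0 then v else 1)))) *
      (pComm (g (Multiplicative.ofAdd (u * v)))
        (pNest (List.ofFn fun k => y k (Multiplicative.ofAdd (1 : K)))))⁻¹
      ∈ (⊤ : Subgroup H).lowerCentralSeries (p + 2) := by
  set π : H →* H ⧸ (⊤ : Subgroup H).lowerCentralSeries (p + 2) :=
    QuotientGroup.mk' ((⊤ : Subgroup H).lowerCentralSeries (p + 2)) with hπdef
  have hcen : ∀ w, w ∈ (⊤ : Subgroup H).lowerCentralSeries (p + 1) →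
      ∀ q : H ⧸ (⊤ : Subgroup H).lowerCentralSeries (p + 2), Commute (π w) q := fun w hw q =>
    central_quot (p + 1) w hw q
  have hcH_mem : ∀ w : K,
      pNest (List.ofFn fun k => y k (Multiplicative.ofAdd (if (k : ℕ) = 0 then w else 1)))
        ∈ (⊤ : Subgroup H).lowerCentralSeries p := by
    intro w
    simpa using pNest_mem
      (List.ofFn fun k => y k (Multiplicative.ofAdd (if (k : ℕ) = 0 then w else 1)))
  have hFH_mem : ∀ u' w : K,
      pComm (g (Multiplicative.ofAdd u'))
        (pNest (List.ofFn fun k => y k (Multiplicative.ofAdd (if (k : ℕ) = 0 then w else 1))))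
        ∈ (⊤ : Subgroup H).lowerCentralSeries (p + 1) := fun u' w => pComm_mem _ _ (hcH_mem w)
  set F : K → K → Subgroup.center (H ⧸ (⊤ : Subgroup H).lowerCentralSeries (p + 2)) := fun u' w =>
    ⟨π (pComm (g (Multiplicative.ofAdd u'))
        (pNest (List.ofFn fun k => y k (Multiplicative.ofAdd (if (k : ℕ) = 0 then w else 1))))),
      Subgroup.mem_center_iff.mpr fun q => (hcen _ (hFH_mem u' w) q).eq.symm⟩ with hFdef
  have h1 : ∀ u' u'' w : K, F (u' + u'') w = F u' w * F u'' w := by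
    intro u' u'' w
    apply Subtype.ext
    show π _ = π _ * π _
    have hx : g (Multiplicative.ofAdd (u' + u'')) =
        g (Multiplicative.ofAdd u') * g (Multiplicative.ofAdd u'') := by
      rw [ofAdd_add, map_mul]
    rw [map_pComm, map_pComm, map_pComm, hx, map_mul, pComm_mul_left]
    have hw : Commute (π (g (Multiplicative.ofAdd u'')))
        (pComm (π (g (Multiplicative.ofAdd u')))
          (π (pNest (List.ofFn fun k =>
            y k (Multiplicative.ofAdd (if (k : ℕ) = 0 then w else 1)))))) := by
      rw [← map_pComm]
      exact (hcen _ (hFH_mem u' w) _).symm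
    rw [conj_of_commute hw]
  have h2 : ∀ u' w w' : K, F u' (w + w') = F u' w * F u' w' := by
    intro u' w w'
    apply Subtype.ext
    show π _ = π _ * π _
    obtain ⟨z, hzmem, hsplit⟩ := cH_split K p y w w'
    have hz : ∀ q : H ⧸ (⊤ : Subgroup H).lowerCentralSeries (p + 2), Commute (π z) q :=
      fun q => hcen z hzmem q
    rw [map_pComm, map_pComm, map_pComm, hsplit, map_mul, map_mul]
    have e1 : π (pNest (List.ofFn fun k =>
          y k (Multiplicative.ofAdd (if (k : ℕ) = 0 then w else 1)))) * π z *
        π (pNest (List.ofFn fun k =>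
          y k (Multiplicative.ofAdd (if (k : ℕ) = 0 then w' else 1)))) =
        (π (pNest (List.ofFn fun k =>
          y k (Multiplicative.ofAdd (if (k : ℕ) = 0 then w else 1)))) *
        π (pNest (List.ofFn fun k =>
          y k (Multiplicative.ofAdd (if (k : ℕ) = 0 then w' else 1))))) * π z := by
      rw [mul_assoc, (hz _).eq, ← mul_assoc]
    rw [e1, pComm_central_right hz, pComm_mul_right]
    have hw2 : Commute (π (pNest (List.ofFn fun k =>
          y k (Multiplicative.ofAdd (if (k : ℕ) = 0 then w' else 1)))))
        (pComm (π (g (Multiplicative.ofAdd u')))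
          (π (pNest (List.ofFn fun k =>
            y k (Multiplicative.ofAdd (if (k : ℕ) = 0 then w else 1)))))) := by
      rw [← map_pComm]
      exact (hcen _ (hFH_mem u' w) _).symm
    rw [conj_of_commute hw2]
    have hw3 : Commute (pComm (π (g (Multiplicative.ofAdd u')))
          (π (pNest (List.ofFn fun k =>
            y k (Multiplicative.ofAdd (if (k : ℕ) = 0 then w' else 1))))))
        (pComm (π (g (Multiplicative.ofAdd u')))
          (π (pNest (List.ofFn fun k =>
            y k (Multiplicative.ofAdd (if (k : ℕ) = 0 then w else 1)))))) := by
      rw [← map_pComm, ← map_pComm]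
      exact hcen _ (hFH_mem u' w') _
    exact hw3.eq
  have key := collect_biadd K F h1 h2 u v
  have hkey : π (pComm (g (Multiplicative.ofAdd u))
      (pNest (List.ofFn fun k =>
        y k (Multiplicative.ofAdd (if (k : ℕ) = 0 then v else 1))))) =
      π (pComm (g (Multiplicative.ofAdd (u * v)))
      (pNest (List.ofFn fun k =>
        y k (Multiplicative.ofAdd (if (k : ℕ) = 0 then (1 : K) else 1))))) :=
    congrArg Subtype.val key
  have hones : (fun k : Fin (p + 1) =>
      y k (Multiplicative.ofAdd (if (k : ℕ) = 0 then (1 : K) else 1))) =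
      fun k => y k (Multiplicative.ofAdd (1 : K)) := by
    funext k
    rw [ite_self]
  rw [hones] at hkey
  have hfin : π (pComm (g (Multiplicative.ofAdd u))
      (pNest (List.ofFn fun k =>
        y k (Multiplicative.ofAdd (if (k : ℕ) = 0 then v else 1)))) *
      (pComm (g (Multiplicative.ofAdd (u * v)))
        (pNest (List.ofFn fun k => y k (Multiplicative.ofAdd (1 : K)))))⁻¹) = 1 := by
    rw [map_mul, map_inv, hkey, mul_inv_cancel]
  exact (QuotientGroup.eq_one_iff _).mp hfin

end QuotientLemmas

/-- Let `K` be a subring of `ℚ`, `H` a group and `xᵢ : (K, +) → H`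
group homomorphisms (`i ∈ I`). Then for all `n ≥ 1`, `i₁, …, iₙ ∈ I` and
`a₁, …, aₙ ∈ K`, the element
`[x_{i₁}(a₁), …, x_{iₙ}(aₙ)]] · ([x_{i₁}(a₁⋯aₙ), x_{i₂}(1), …, x_{iₙ}(1)]])⁻¹`
lies in `γ_{n+1}(H) = (⊤ : Subgroup H).lowerCentralSeries n`. -/
theorem nested_commutator_scalar_collect
    (K : Subring ℚ) {H : Type*} [Group H] {I : Type*}
    (x : I → Multiplicative K →* H)
    (n : ℕ) (hn : 1 ≤ n) (i : Fin n → I) (a : Fin n → K) :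
    pNest (List.ofFn fun k => x (i k) (Multiplicative.ofAdd (a k))) *
      (pNest (List.ofFn fun k => x (i k)
        (Multiplicative.ofAdd (if k.val = 0 then ∏ j, a j else 1))))⁻¹
      ∈ (⊤ : Subgroup H).lowerCentralSeries n := by
  obtain ⟨m, rfl⟩ : ∃ m, n = m + 1 := ⟨n - 1, by omega⟩
  clear hn
  induction m with
  | zero =>
      have hprod : ∏ j, a j = a 0 := Fin.prod_univ_one a
      simp [List.ofFn_succ, pNest, hprod]
  | succ p ih =>
      rw [pNest_ofFn_succ, pNest_ofFn_succ, Fin.prod_univ_succ]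
      simp only [Fin.val_zero, Fin.val_succ, Nat.succ_ne_zero, if_false, if_true,
        eq_self_iff_true]
      have hA := ih (fun k => i k.succ) (fun k => a k.succ)
      have h1 := pComm_congr_right (x (i 0) (Multiplicative.ofAdd (a 0))) hA
      have h2 := head_collect K p (x (i 0)) (fun k => x (i k.succ)) (a 0)
        (∏ j, a (Fin.succ j))
      have hcomb :
          pComm (x (i 0) (Multiplicative.ofAdd (a 0)))
              (pNest (List.ofFn fun k : Fin (p + 1) =>
                x (i k.succ) (Multiplicative.ofAdd (a k.succ)))) *
            (pComm (x (i 0) (Multiplicative.ofAdd (a 0 * ∏ j, a (Fin.succ j))))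
              (pNest (List.ofFn fun k : Fin (p + 1) =>
                x (i k.succ) (Multiplicative.ofAdd (1 : K)))))⁻¹ =
          (pComm (x (i 0) (Multiplicative.ofAdd (a 0)))
              (pNest (List.ofFn fun k : Fin (p + 1) =>
                x (i k.succ) (Multiplicative.ofAdd (a k.succ)))) *
            (pComm (x (i 0) (Multiplicative.ofAdd (a 0)))
              (pNest (List.ofFn fun k : Fin (p + 1) =>
                x (i k.succ) (Multiplicative.ofAdd
                  (if (k : ℕ) = 0 then ∏ j, a (Fin.succ j) else 1)))))⁻¹) *
          (pComm (x (i 0) (Multiplicative.ofAdd (a 0)))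
              (pNest (List.ofFn fun k : Fin (p + 1) =>
                x (i k.succ) (Multiplicative.ofAdd
                  (if (k : ℕ) = 0 then ∏ j, a (Fin.succ j) else 1)))) *
            (pComm (x (i 0) (Multiplicative.ofAdd (a 0 * ∏ j, a (Fin.succ j))))
              (pNest (List.ofFn fun k : Fin (p + 1) =>
                x (i k.succ) (Multiplicative.ofAdd (1 : K)))))⁻¹) := by
        group
      rw [hcomb]
      exact mul_mem h1 h2
end

section
/- Let I be a set and let H be a group generated by the images of group homomorphisms x_i : (ℚ, +) → H (i ∈ I). Assume that for each positive integer s there is a group endomorphism of H sending x_i(a) to x_i(a/s) for all i ∈ I and a ∈ ℚ. Then the quotient group H/γ_n(H) is torsion-free for every n ≥ 1; consequently, H is residually torsion-free nilpotent if and only if H is residually nilpotent. -/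
/-- The pre-2025 Mathlib definition: no nontrivial element has finite order. -/
def Monoid.IsTorsionFree (G : Type*) [Monoid G] : Prop :=
  ∀ g : G, g ≠ 1 → ¬IsOfFinOrder g

section Aux

variable {H : Type} [Group H]

open Subgroup QuotientGroup Function
open scoped commutatorElement

lemma lcs_succ_comm (k : ℕ) :
    (⊤ : Subgroup H).lowerCentralSeries (k + 1) = ⁅(⊤ : Subgroup H).lowerCentralSeries k, (⊤ : Subgroup H)⁆ := by
  rw [Subgroup.lowerCentralSeries_succ]

/-- Elements of `γ_{k+1} = (⊤ : Subgroup H).lowerCentralSeries k` are central in `H ⧸ (⊤ : Subgroup H).lowerCentralSeries (k+1)`. -/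
lemma lcs_central {k : ℕ} {a : H} (ha : a ∈ (⊤ : Subgroup H).lowerCentralSeries k)
    (z : H ⧸ (⊤ : Subgroup H).lowerCentralSeries (k + 1)) :
    Commute (QuotientGroup.mk a) z := by
  induction z using QuotientGroup.induction_on with
  | _ y =>
    show QuotientGroup.mk a * QuotientGroup.mk y = QuotientGroup.mk y * QuotientGroup.mk a
    rw [← QuotientGroup.mk_mul, ← QuotientGroup.mk_mul, QuotientGroup.eq]
    have h1 : (a * y)⁻¹ * (y * a) = ⁅a⁻¹, y⁻¹⁆⁻¹ := by group
    rw [h1, Subgroup.lowerCentralSeries_succ]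
    exact Subgroup.inv_mem _
      (Subgroup.commutator_mem_commutator (Subgroup.inv_mem _ ha) (Subgroup.mem_top _))

lemma comm_mul_left {k : ℕ} {a₁ a₂ : H} (h1 : a₁ ∈ (⊤ : Subgroup H).lowerCentralSeries k)
    (h2 : a₂ ∈ (⊤ : Subgroup H).lowerCentralSeries k) (b : H) :
    (QuotientGroup.mk ⁅a₁ * a₂, b⁆ : H ⧸ (⊤ : Subgroup H).lowerCentralSeries (k + 2)) =
      QuotientGroup.mk ⁅a₁, b⁆ * QuotientGroup.mk ⁅a₂, b⁆ := by
  have hc : ⁅a₂, b⁆ ∈ (⊤ : Subgroup H).lowerCentralSeries (k + 1) := by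
    rw [Subgroup.lowerCentralSeries_succ]
    exact Subgroup.commutator_mem_commutator h2 (Subgroup.mem_top _)
  have hcent := lcs_central (k := k + 1) hc
  have key : ⁅a₁ * a₂, b⁆ = a₁ * ⁅a₂, b⁆ * a₁⁻¹ * ⁅a₁, b⁆ := by group
  rw [key]
  rw [show ((QuotientGroup.mk (a₁ * ⁅a₂, b⁆ * a₁⁻¹ * ⁅a₁, b⁆) : H ⧸ (⊤ : Subgroup H).lowerCentralSeries (k + 2))) =
      QuotientGroup.mk a₁ * QuotientGroup.mk ⁅a₂, b⁆ * (QuotientGroup.mk a₁)⁻¹ *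
        QuotientGroup.mk ⁅a₁, b⁆ by
    rw [← QuotientGroup.mk_inv, ← QuotientGroup.mk_mul, ← QuotientGroup.mk_mul,
      ← QuotientGroup.mk_mul]]
  rw [← (hcent (QuotientGroup.mk a₁)).eq, mul_inv_cancel_right]
  exact (hcent (QuotientGroup.mk ⁅a₁, b⁆)).eq

lemma comm_pow_left {k : ℕ} {a : H} (ha : a ∈ (⊤ : Subgroup H).lowerCentralSeries k) (b : H) (m : ℕ) :
    (QuotientGroup.mk ⁅a ^ m, b⁆ : H ⧸ (⊤ : Subgroup H).lowerCentralSeries (k + 2)) =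
      (QuotientGroup.mk ⁅a, b⁆ : H ⧸ (⊤ : Subgroup H).lowerCentralSeries (k + 2)) ^ m := by
  induction m with
  | zero => simp; exact (pow_zero _).symm
  | succ m ih =>
    rw [pow_succ, comm_mul_left (Subgroup.pow_mem _ ha m) ha, ih, pow_succ]

/-- The map `b ↦ ⁅g, b⁆ mod γ_{k+2}` is a homomorphism when `g ∈ γ_k`. -/
def commHom {k : ℕ} (g : H) (hg : g ∈ (⊤ : Subgroup H).lowerCentralSeries k) :
    H →* H ⧸ (⊤ : Subgroup H).lowerCentralSeries (k + 2) where
  toFun b := QuotientGroup.mk ⁅g, b⁆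
  map_one' := by simp; rfl
  map_mul' b₁ b₂ := by
    show (QuotientGroup.mk ⁅g, b₁ * b₂⁆ : H ⧸ (⊤ : Subgroup H).lowerCentralSeries (k + 2)) =
      QuotientGroup.mk ⁅g, b₁⁆ * QuotientGroup.mk ⁅g, b₂⁆
    have hc : ⁅g, b₂⁆ ∈ (⊤ : Subgroup H).lowerCentralSeries (k + 1) := by
      rw [Subgroup.lowerCentralSeries_succ]
      exact Subgroup.commutator_mem_commutator hg (Subgroup.mem_top _)
    have hcent := lcs_central (k := k + 1) hc
    have key : ⁅g, b₁ * b₂⁆ = ⁅g, b₁⁆ * (b₁ * ⁅g, b₂⁆ * b₁⁻¹) := by group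
    rw [key, QuotientGroup.mk_mul, QuotientGroup.mk_mul, QuotientGroup.mk_mul,
      QuotientGroup.mk_inv]
    congr 1
    rw [← (hcent (QuotientGroup.mk b₁)).eq, mul_inv_cancel_right]

variable {I : Type} (x : I → Multiplicative ℚ →* H)

/-- Generic "generator" argument: two homs into central values agreeing with an `s`-power
twist on the generators agree everywhere. -/
lemma hom_pow_eq {N : Type} [Group N] (f₁ f₂ : H →* N)
    (hgen : Subgroup.closure (⋃ i, Set.range (x i)) = ⊤)
    (hc : ∀ w : H, ∀ z : N, Commute (f₁ w) z)
    (s : ℕ)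
    (hgens : ∀ (i : I) (m : Multiplicative ℚ), f₁ (x i m) ^ s = f₂ (x i m)) :
    ∀ w : H, f₁ w ^ s = f₂ w := by
  set T : Subgroup H :=
    { carrier := {w : H | f₁ w ^ s = f₂ w}
      one_mem' := by simp
      mul_mem' := by
        intro a b ha hb
        simp only [Set.mem_setOf_eq, map_mul] at *
        rw [(hc a (f₁ b)).mul_pow, ha, hb]
      inv_mem' := by
        intro a ha
        simp only [Set.mem_setOf_eq, map_inv] at *
        rw [inv_pow, ha] } with hT
  have hle : Subgroup.closure (⋃ i, Set.range (x i)) ≤ T := by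
    rw [Subgroup.closure_le]
    rintro w hw
    simp only [Set.mem_iUnion, Set.mem_range] at hw
    obtain ⟨i, m, rfl⟩ := hw
    exact hgens i m
  intro w
  have : w ∈ T := hle (hgen ▸ Subgroup.mem_top w)
  exact this

end Aux

section Main

variable {H : Type} [Group H] {I : Type}

open Subgroup QuotientGroup
open scoped commutatorElement

lemma key_lemma (x : I → Multiplicative ℚ →* H)
    (hgen : Subgroup.closure (⋃ i, Set.range (x i)) = ⊤)
    {s : ℕ} (hs : 0 < s) (π : H →* H)
    (hπs : ∀ (i : I) (a : ℚ),
      π (x i (Multiplicative.ofAdd a)) = x i (Multiplicative.ofAdd (a / s))) :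
    ∀ (k : ℕ), ∀ g ∈ (⊤ : Subgroup H).lowerCentralSeries k,
      (QuotientGroup.mk (π g) : H ⧸ (⊤ : Subgroup H).lowerCentralSeries (k + 1)) ^ s ^ (k + 1) =
        QuotientGroup.mk g := by
  have hdiv : ∀ (i : I) (m : Multiplicative ℚ), (π (x i m)) ^ s = x i m := by
    intro i m
    rw [show m = Multiplicative.ofAdd (Multiplicative.toAdd m) from rfl, hπs, ← map_pow,
      ← ofAdd_nsmul]
    congr 2
    have hs' : (s : ℚ) ≠ 0 := Nat.cast_ne_zero.mpr hs.ne'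
    rw [nsmul_eq_mul]
    field_simp
  intro k
  induction k with
  | zero =>
    intro g _
    have := hom_pow_eq x ((QuotientGroup.mk' ((⊤ : Subgroup H).lowerCentralSeries 1)).comp π)
      (QuotientGroup.mk' ((⊤ : Subgroup H).lowerCentralSeries 1)) hgen
      (fun w z => lcs_central (k := 0) (Subgroup.mem_top (π w)) z) s
      (fun i m => by simp only [MonoidHom.comp_apply, ← map_pow, hdiv]) g
    rw [zero_add, pow_one]
    exact this
  | succ k ih =>
    intro g hg
    show (QuotientGroup.mk (π g) : H ⧸ (⊤ : Subgroup H).lowerCentralSeries (k + 2)) ^ s ^ (k + 2) =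
      QuotientGroup.mk g
    set T : Subgroup H :=
      { carrier := {w : H | w ∈ (⊤ : Subgroup H).lowerCentralSeries (k + 1) ∧
          (QuotientGroup.mk (π w) : H ⧸ (⊤ : Subgroup H).lowerCentralSeries (k + 2)) ^ s ^ (k + 2) =
            QuotientGroup.mk w}
        one_mem' := ⟨Subgroup.one_mem _, by simp; exact one_pow _⟩
        mul_mem' := by
          rintro a b ⟨ha1, ha2⟩ ⟨hb1, hb2⟩
          refine ⟨Subgroup.mul_mem _ ha1 hb1, ?_⟩
          have hπa : π a ∈ (⊤ : Subgroup H).lowerCentralSeries (k + 1) :=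
            Subgroup.lowerCentralSeries.map π (k + 1) ⟨a, ha1, rfl⟩
          have hcom : Commute (QuotientGroup.mk (π a) :
              H ⧸ (⊤ : Subgroup H).lowerCentralSeries (k + 2)) (QuotientGroup.mk (π b)) :=
            lcs_central (k := k + 1) hπa _
          rw [map_mul, QuotientGroup.mk_mul, hcom.mul_pow, ha2, hb2, QuotientGroup.mk_mul]
        inv_mem' := by
          rintro a ⟨ha1, ha2⟩
          refine ⟨Subgroup.inv_mem _ ha1, ?_⟩
          rw [map_inv, QuotientGroup.mk_inv, inv_pow, ha2, QuotientGroup.mk_inv] } with hTdef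
    have hle : (⊤ : Subgroup H).lowerCentralSeries (k + 1) ≤ T := by
      rw [lcs_succ_comm, Subgroup.commutator_le]
      intro g1 hg1 g2 _
      have hmem : ⁅g1, g2⁆ ∈ (⊤ : Subgroup H).lowerCentralSeries (k + 1) := by
        rw [Subgroup.lowerCentralSeries_succ]
        exact Subgroup.commutator_mem_commutator hg1 (Subgroup.mem_top _)
      refine ⟨hmem, ?_⟩
      -- Step B: second slot
      have hB : ∀ h : H, (QuotientGroup.mk ⁅g1, π h⁆ : H ⧸ (⊤ : Subgroup H).lowerCentralSeries (k + 2)) ^ s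
          = QuotientGroup.mk ⁅g1, h⁆ := by
        intro h
        have := hom_pow_eq x ((commHom g1 hg1).comp π) (commHom g1 hg1) hgen
          (fun w z => lcs_central (k := k + 1)
            (by rw [Subgroup.lowerCentralSeries_succ];
                exact Subgroup.commutator_mem_commutator hg1 (Subgroup.mem_top _)) z) s
          (fun i m => by simp only [MonoidHom.comp_apply, ← map_pow, hdiv]) h
        exact this
      -- Step A: first slot, via the inductive hypothesis
      have hπg : π g1 ∈ (⊤ : Subgroup H).lowerCentralSeries k := Subgroup.lowerCentralSeries.map π k ⟨g1, hg1, rfl⟩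
      have hIH : (QuotientGroup.mk ((π g1) ^ s ^ (k + 1)) : H ⧸ (⊤ : Subgroup H).lowerCentralSeries (k + 1))
          = QuotientGroup.mk g1 := by
        rw [QuotientGroup.mk_pow]
        exact ih g1 hg1
      have hcmem : ((π g1) ^ s ^ (k + 1))⁻¹ * g1 ∈ (⊤ : Subgroup H).lowerCentralSeries (k + 1) :=
        QuotientGroup.eq.mp hIH
      have hgdecomp : g1 = (π g1) ^ s ^ (k + 1) * (((π g1) ^ s ^ (k + 1))⁻¹ * g1) := by group
      have hA : (QuotientGroup.mk ⁅π g1, π g2⁆ : H ⧸ (⊤ : Subgroup H).lowerCentralSeries (k + 2)) ^ s ^ (k + 1)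
          = QuotientGroup.mk ⁅g1, π g2⁆ := by
        conv_rhs => rw [hgdecomp]
        rw [comm_mul_left (Subgroup.pow_mem _ hπg _)
          (Subgroup.lowerCentralSeries_antitone _ (Nat.le_succ k) hcmem) (π g2),
          comm_pow_left hπg]
        have hzero : (QuotientGroup.mk ⁅((π g1) ^ s ^ (k + 1))⁻¹ * g1, π g2⁆ :
            H ⧸ (⊤ : Subgroup H).lowerCentralSeries (k + 2)) = 1 := by
          rw [QuotientGroup.eq_one_iff, show (k + 2) = (k + 1) + 1 from rfl,
            Subgroup.lowerCentralSeries_succ]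
          exact Subgroup.commutator_mem_commutator hcmem (Subgroup.mem_top _)
        rw [hzero, mul_one]
      rw [map_commutatorElement, show s ^ (k + 2) = s ^ (k + 1) * s from pow_succ s (k + 1),
        pow_mul, hA, hB g2]
    exact (hle hg).2

lemma tf_lemma (x : I → Multiplicative ℚ →* H)
    (hgen : Subgroup.closure (⋃ i, Set.range (x i)) = ⊤)
    (hπ : ∀ s : ℕ, 0 < s →
      ∃ π : H →* H, ∀ (i : I) (a : ℚ),
        π (x i (Multiplicative.ofAdd a)) = x i (Multiplicative.ofAdd (a / s))) :
    ∀ n : ℕ, Monoid.IsTorsionFree (H ⧸ (⊤ : Subgroup H).lowerCentralSeries n) := by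
  intro n
  induction n with
  | zero =>
    have : Subsingleton (H ⧸ (⊤ : Subgroup H).lowerCentralSeries 0) :=
      QuotientGroup.subsingleton_quotient_top
    exact fun g hg _ => hg (Subsingleton.elim _ _)
  | succ n ihn =>
    intro g hg hfin
    obtain ⟨a, rfl⟩ := QuotientGroup.mk_surjective g
    obtain ⟨m, hm, hma⟩ := isOfFinOrder_iff_pow_eq_one.mp hfin
    have ham : a ^ m ∈ (⊤ : Subgroup H).lowerCentralSeries (n + 1) := by
      rw [← QuotientGroup.eq_one_iff, QuotientGroup.mk_pow]
      exact hma
    have ha : a ∈ (⊤ : Subgroup H).lowerCentralSeries n := by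
      by_contra hna
      have h1 : (QuotientGroup.mk a : H ⧸ (⊤ : Subgroup H).lowerCentralSeries n) ≠ 1 := by
        rw [Ne, QuotientGroup.eq_one_iff]; exact hna
      exact ihn _ h1 (isOfFinOrder_iff_pow_eq_one.mpr ⟨m, hm, by
        rw [← QuotientGroup.mk_pow, QuotientGroup.eq_one_iff]
        exact Subgroup.lowerCentralSeries_antitone _ (Nat.le_succ n) ham⟩)
    obtain ⟨π, hπs⟩ := hπ m hm
    have hkey := key_lemma x hgen hm π hπs n a ha
    apply hg
    rw [← hkey, ← QuotientGroup.mk_pow, ← map_pow,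
      show a ^ m ^ (n + 1) = (a ^ m) ^ m ^ n by rw [← pow_mul, ← pow_succ'],
      QuotientGroup.eq_one_iff]
    exact Subgroup.lowerCentralSeries.map π (n + 1) ⟨(a ^ m) ^ m ^ n, Subgroup.pow_mem _ ham _, rfl⟩

lemma map_lcs_surjective {G G' : Type} [Group G] [Group G'] (f : G →* G')
    (hf : Function.Surjective f) (n : ℕ) :
    Subgroup.map f ((⊤ : Subgroup G).lowerCentralSeries n) = (⊤ : Subgroup G').lowerCentralSeries n := by
  induction n with
  | zero => simpa using Subgroup.map_top_of_surjective f hf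
  | succ n ih =>
    rw [lcs_succ_comm, lcs_succ_comm, Subgroup.map_commutator, ih,
      Subgroup.map_top_of_surjective f hf]

lemma nilp_quot (n : ℕ) : Group.IsNilpotent (H ⧸ (⊤ : Subgroup H).lowerCentralSeries n) :=
  Subgroup.nilpotent_iff_lowerCentralSeries.mpr ⟨n, by
    rw [← map_lcs_surjective (QuotientGroup.mk' ((⊤ : Subgroup H).lowerCentralSeries n))
      (QuotientGroup.mk'_surjective _) n, Subgroup.map_eq_bot_iff, QuotientGroup.ker_mk']⟩

end Main

/-- Let `H` be a group generated by the images of homomorphisms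
`xᵢ : (ℚ, +) → H` such that for every positive integer `s` there is an endomorphism
of `H` sending each `xᵢ(a)` to `xᵢ(a/s)`. Then all the quotients `H/γₙ(H)` (`n ≥ 1`)
are torsion-free; consequently `H` is residually torsion-free nilpotent if and only
if it is residually nilpotent. (With Mathlib's indexing,
`γ_{n+1}(H) = (⊤ : Subgroup H).lowerCentralSeries n`.) -/
theorem torsionfree_lcs_quotients_of_divisible_generators
    {H : Type} [Group H] {I : Type}
    (x : I → Multiplicative ℚ →* H)
    (hgen : Subgroup.closure (⋃ i, Set.range (x i)) = ⊤)
    (hπ : ∀ s : ℕ, 0 < s →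
      ∃ π : H →* H, ∀ (i : I) (a : ℚ),
        π (x i (Multiplicative.ofAdd a)) = x i (Multiplicative.ofAdd (a / s))) :
    (∀ n : ℕ, Monoid.IsTorsionFree (H ⧸ (⊤ : Subgroup H).lowerCentralSeries n)) ∧
    ((∀ g : H, g ≠ 1 → ∃ (Q : Type) (_ : Group Q) (f : H →* Q),
        Function.Surjective f ∧ Group.IsNilpotent Q ∧ Monoid.IsTorsionFree Q ∧ f g ≠ 1)
      ↔ (⨅ n, (⊤ : Subgroup H).lowerCentralSeries n) = ⊥) := by
  have htf := tf_lemma x hgen hπ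
  refine ⟨htf, ?_, ?_⟩
  · intro P
    rw [eq_bot_iff]
    intro g hgmem
    rw [Subgroup.mem_bot]
    by_contra hg
    obtain ⟨Q, _, f, hsurj, hnil, _, hfg⟩ := P g hg
    obtain ⟨n, hn⟩ := Subgroup.nilpotent_iff_lowerCentralSeries.mp hnil
    have : f g ∈ (⊤ : Subgroup Q).lowerCentralSeries n :=
      Subgroup.lowerCentralSeries.map f n ⟨g, Subgroup.mem_iInf.mp hgmem n, rfl⟩
    rw [hn, Subgroup.mem_bot] at this
    exact hfg this
  · intro hbot g hg
    have hex : ∃ n, g ∉ (⊤ : Subgroup H).lowerCentralSeries n := by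
      by_contra h
      push_neg at h
      exact hg (Subgroup.mem_bot.mp (hbot ▸ Subgroup.mem_iInf.mpr h))
    obtain ⟨n, hn⟩ := hex
    exact ⟨H ⧸ (⊤ : Subgroup H).lowerCentralSeries n, inferInstance, QuotientGroup.mk' _,
      QuotientGroup.mk'_surjective _, nilp_quot n, htf n,
      fun h => hn ((QuotientGroup.eq_one_iff g).mp h)⟩
end

section
/- Let F be the free product of two copies U₁, U₂ of the additive group (ℚ,+), with canonical homomorphisms x₁, x₂ : (ℚ,+) → F, and let G'' be the quotient of F by the normal closure of the set of all elements [x₁(a), [x₁(b), x₂(c)]] and [x₂(a), [x₂(b), x₁(c)]] for a, b, c ∈ ℚ. Then the unique group homomorphism θ : G'' → SL₃(ℚ) with θ(x₁(a)) = 1 + a·E₁₂ and θ(x₂(a)) = 1 + a·E₂₃ for all a ∈ ℚ is injective, and its image is the group of upper unitriangular 3×3 matrices over ℚ (the Heisenberg group over ℚ). -/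
section General
variable {G H : Type*} [Group G] [Group H]

lemma mul_pComm (g h : G) : g * h = h * g * pComm g h := by unfold pComm; group

lemma pComm_eq_iff {g h k : G} : pComm g h = k ↔ g * h = h * g * k := by
  constructor
  · rintro rfl; exact mul_pComm g h
  · intro H
    have : k = (h * g)⁻¹ * (g * h) := by rw [H]; group
    rw [this]; unfold pComm; group

lemma pComm_eq_one_iff {g h : G} : pComm g h = 1 ↔ g * h = h * g := by
  rw [pComm_eq_iff, mul_one]

lemma pComm_swap (g h : G) : pComm h g = (pComm g h)⁻¹ := by unfold pComm; group

lemma map_pComm_s11 (f : G →* H) (g h : G) : f (pComm g h) = pComm (f g) (f h) := by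
  simp [pComm]

lemma pComm_one_left (h : G) : pComm 1 h = 1 := by unfold pComm; group

lemma pComm_mul_left_s11 (x x' y : G) (hP : ∀ g, pComm x y * g = g * pComm x y) :
    pComm (x * x') y = pComm x y * pComm x' y := by
  rw [pComm_eq_iff]
  have e1 : x * y = y * x * pComm x y := mul_pComm x y
  have e2 : x' * y = y * x' * pComm x' y := mul_pComm x' y
  calc x * x' * y = x * (y * x' * pComm x' y) := by rw [mul_assoc, e2]
    _ = x * y * x' * pComm x' y := by simp only [mul_assoc]
    _ = y * x * pComm x y * x' * pComm x' y := by rw [e1]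
    _ = y * x * (x' * pComm x y) * pComm x' y := by rw [mul_assoc (y * x), hP]
    _ = y * (x * x') * (pComm x y * pComm x' y) := by simp only [mul_assoc]

lemma pComm_mul_right_s11 (x y y' : G) (hP : ∀ g, pComm x y * g = g * pComm x y) :
    pComm x (y * y') = pComm x y * pComm x y' := by
  rw [pComm_eq_iff]
  have e1 : x * y = y * x * pComm x y := mul_pComm x y
  have e2 : x * y' = y' * x * pComm x y' := mul_pComm x y'
  calc x * (y * y') = x * y * y' := (mul_assoc _ _ _).symm
    _ = y * x * pComm x y * y' := by rw [e1]
    _ = y * x * (y' * pComm x y) := by rw [mul_assoc (y * x), hP]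
    _ = y * x * y' * pComm x y := by simp only [mul_assoc]
    _ = y * (x * y') * pComm x y := by rw [mul_assoc y x y']
    _ = y * (y' * x * pComm x y') * pComm x y := by rw [e2]
    _ = y * y' * x * (pComm x y' * pComm x y) := by simp only [mul_assoc]
    _ = y * y' * x * (pComm x y * pComm x y') := by rw [hP]

open Matrix

def U (a c b : ℚ) : Matrix (Fin 3) (Fin 3) ℚ := !![1,a,b;0,1,c;0,0,1]

lemma U_mul (a c b a' c' b' : ℚ) :
    U a c b * U a' c' b' = U (a+a') (c+c') (b+b'+a*c') := by
  ext i j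
  fin_cases i <;> fin_cases j <;>
    simp [U, Matrix.mul_apply, Fin.sum_univ_three, Matrix.vecHead, Matrix.vecTail] <;> ring

lemma U_det (a c b : ℚ) : (U a c b).det = 1 := by
  simp [U, Matrix.det_fin_three, Matrix.vecHead, Matrix.vecTail]

def sU (a c b : ℚ) : Matrix.SpecialLinearGroup (Fin 3) ℚ := ⟨U a c b, U_det a c b⟩

lemma sU_congr {a c b a' c' b' : ℚ} (h1 : a = a') (h2 : c = c') (h3 : b = b') :
    sU a c b = sU a' c' b' := by rw [h1, h2, h3]

lemma sU_mul (a c b a' c' b' : ℚ) :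
    sU a c b * sU a' c' b' = sU (a+a') (c+c') (b+b'+a*c') :=
  Subtype.ext (U_mul a c b a' c' b')

lemma sU_one : sU 0 0 0 = 1 := by
  apply Subtype.ext
  show U 0 0 0 = (1 : Matrix (Fin 3) (Fin 3) ℚ)
  rw [Matrix.one_fin_three]; rfl

lemma sU_inv (a c b : ℚ) : (sU a c b)⁻¹ = sU (-a) (-c) (a*c-b) := by
  apply inv_eq_of_mul_eq_one_right
  rw [sU_mul]
  rw [show a + -a = 0 by ring, show c + -c = 0 by ring,
    show b + (a*c-b) + a * -c = 0 by ring, sU_one]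

lemma pComm_sU (a c b a' c' b' : ℚ) :
    pComm (sU a c b) (sU a' c' b') = sU 0 0 (a*c' - a'*c) := by
  rw [pComm_eq_iff, sU_mul, sU_mul, sU_mul]
  exact sU_congr (by ring) (by ring) (by ring)

def S1 : Multiplicative ℚ →* Matrix.SpecialLinearGroup (Fin 3) ℚ :=
  MonoidHom.mk' (fun a => sU a.toAdd 0 0) (fun a b => by
    rw [sU_mul]; exact sU_congr rfl (by ring) (by ring))

def S2 : Multiplicative ℚ →* Matrix.SpecialLinearGroup (Fin 3) ℚ :=
  MonoidHom.mk' (fun a => sU 0 a.toAdd 0) (fun a b => by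
    rw [sU_mul]; exact sU_congr (by ring) rfl (by ring))
-- === pinned definitions ===
/-- The free product `F = U₁ * U₂` of two copies of `(ℚ, +)`. -/
abbrev FreeProdQ2 : Type := Monoid.Coprod (Multiplicative ℚ) (Multiplicative ℚ)

/-- The canonical homomorphisms `x₁, x₂ : (ℚ, +) → F`. -/
def y1 : Multiplicative ℚ →* FreeProdQ2 := Monoid.Coprod.inl
def y2 : Multiplicative ℚ →* FreeProdQ2 := Monoid.Coprod.inr

/-- The defining relators `[x₁(a), [x₁(b), x₂(c)]]` and `[x₂(a), [x₂(b), x₁(c)]]`. -/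
def relsHeis : Set FreeProdQ2 :=
  {g | ∃ a b c : ℚ,
    g = pComm (y1 (Multiplicative.ofAdd a))
          (pComm (y1 (Multiplicative.ofAdd b)) (y2 (Multiplicative.ofAdd c))) ∨
    g = pComm (y2 (Multiplicative.ofAdd a))
          (pComm (y2 (Multiplicative.ofAdd b)) (y1 (Multiplicative.ofAdd c)))}

/-- The group `G'' = U₁ * U₂ / ⟪[U₁,[U₁,U₂]], [U₂,[U₂,U₁]]⟫`. -/
abbrev HeisPres : Type := FreeProdQ2 ⧸ Subgroup.normalClosure relsHeis

/-- The induced homomorphisms `xᵢ : (ℚ, +) → G''`. -/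
def z1 : Multiplicative ℚ →* HeisPres :=
  (QuotientGroup.mk' (Subgroup.normalClosure relsHeis)).comp y1
def z2 : Multiplicative ℚ →* HeisPres :=
  (QuotientGroup.mk' (Subgroup.normalClosure relsHeis)).comp y2

/-- The defining property of `θ : G'' →* SL₃(ℚ)`: `θ(x₁(a)) = 1 + a·E₁₂`,
`θ(x₂(a)) = 1 + a·E₂₃`. -/
def IsTheta (θ : HeisPres →* Matrix.SpecialLinearGroup (Fin 3) ℚ) : Prop :=
  (∀ a : ℚ, (↑(θ (z1 (Multiplicative.ofAdd a))) : Matrix (Fin 3) (Fin 3) ℚ) =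
      1 + Matrix.single 0 1 a) ∧
  (∀ a : ℚ, (↑(θ (z2 (Multiplicative.ofAdd a))) : Matrix (Fin 3) (Fin 3) ℚ) =
      1 + Matrix.single 1 2 a)

-- === development on HeisPres ===
section Heis
open Multiplicative

def z1' (a : ℚ) : HeisPres := z1 (ofAdd a)
def z2' (a : ℚ) : HeisPres := z2 (ofAdd a)
def c12 (a c : ℚ) : HeisPres := pComm (z1' a) (z2' c)
def tH (b : ℚ) : HeisPres := c12 b 1

lemma z1'_add (u v : ℚ) : z1' (u + v) = z1' u * z1' v := by
  rw [z1', z1', z1', ofAdd_add, _root_.map_mul]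

lemma z2'_add (u v : ℚ) : z2' (u + v) = z2' u * z2' v := by
  rw [z2', z2', z2', ofAdd_add, _root_.map_mul]

lemma z1'_zero : z1' 0 = 1 := by rw [z1', ofAdd_zero, _root_.map_one]
lemma z2'_zero : z2' 0 = 1 := by rw [z2', ofAdd_zero, _root_.map_one]

lemma mk_rel {w : FreeProdQ2} (hw : w ∈ relsHeis) :
    QuotientGroup.mk' (Subgroup.normalClosure relsHeis) w = 1 :=
  (QuotientGroup.eq_one_iff w).2 (Subgroup.subset_normalClosure hw)

lemma rel1 (a b c : ℚ) : pComm (z1' a) (c12 b c) = 1 := by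
  have h := mk_rel (⟨a, b, c, Or.inl rfl⟩ : _ ∈ relsHeis)
  rw [map_pComm_s11, map_pComm_s11] at h
  exact h

lemma rel2 (a b c : ℚ) : pComm (z2' a) (pComm (z2' b) (z1' c)) = 1 := by
  have h := mk_rel (⟨a, b, c, Or.inr rfl⟩ : _ ∈ relsHeis)
  rw [map_pComm_s11, map_pComm_s11] at h
  exact h

lemma c12_comm (b c : ℚ) (g : HeisPres) : c12 b c * g = g * c12 b c := by
  obtain ⟨w, rfl⟩ := QuotientGroup.mk'_surjective _ g
  induction w using Monoid.Coprod.induction_on with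
  | inl m => exact (pComm_eq_one_iff.1 (rel1 (toAdd m) b c)).symm
  | inr n =>
    have h := pComm_eq_one_iff.1 (rel2 (toAdd n) c b)
    rw [pComm_swap (z1' b) (z2' c)] at h
    have hc : Commute (z2' (toAdd n)) (c12 b c)⁻¹ := h
    have hc2 : Commute (z2' (toAdd n)) (c12 b c) := by
      have := hc.inv_right; rwa [inv_inv] at this
    exact hc2.symm.eq
  | mul x y hx hy =>
    rw [_root_.map_mul, ← mul_assoc, hx, mul_assoc, hy, mul_assoc]

lemma c12_add_left (a a' c : ℚ) : c12 (a + a') c = c12 a c * c12 a' c := by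
  rw [c12, z1'_add]
  exact pComm_mul_left_s11 _ _ _ (c12_comm a c)

lemma c12_add_right (a c c' : ℚ) : c12 a (c + c') = c12 a c * c12 a c' := by
  rw [c12, z2'_add]
  exact pComm_mul_right_s11 _ _ _ (c12_comm a c)

lemma c12_zsmul_left (k : ℤ) (a c : ℚ) : c12 ((k : ℚ) * a) c = (c12 a c) ^ k := by
  let φ : ℚ →+ Additive HeisPres :=
    AddMonoidHom.mk' (fun x => Additive.ofMul (c12 x c))
      (fun x y => congrArg Additive.ofMul (c12_add_left x y c))
  have h := map_zsmul φ k a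
  have h2 : Additive.ofMul (c12 ((k : ℚ) * a) c) = Additive.ofMul ((c12 a c) ^ k) := by
    rw [ofMul_zpow]
    simpa [φ, zsmul_eq_mul] using h
  exact Additive.ofMul.injective h2

lemma c12_zsmul_right (k : ℤ) (a c : ℚ) : c12 a ((k : ℚ) * c) = (c12 a c) ^ k := by
  let φ : ℚ →+ Additive HeisPres :=
    AddMonoidHom.mk' (fun x => Additive.ofMul (c12 a x))
      (fun x y => congrArg Additive.ofMul (c12_add_right a x y))
  have h := map_zsmul φ k c
  have h2 : Additive.ofMul (c12 a ((k : ℚ) * c)) = Additive.ofMul ((c12 a c) ^ k) := by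
    rw [ofMul_zpow]
    simpa [φ, zsmul_eq_mul] using h
  exact Additive.ofMul.injective h2

lemma c12_eq_tH (a c : ℚ) : c12 a c = tH (a * c) := by
  have hd : ((c.den : ℚ)) ≠ 0 := by exact_mod_cast c.den_ne_zero
  have hnum : ((c.den : ℚ)) * c = (c.num : ℚ) := by
    nth_rewrite 2 [← Rat.num_div_den c]
    field_simp
  have h1 : c12 a c = c12 (a / c.den) c ^ (c.den : ℤ) := by
    rw [← c12_zsmul_left]
    congr 1
    push_cast
    field_simp
  have h2 : c12 (a / c.den) c ^ (c.den : ℤ) = c12 (a / c.den) ((c.num : ℚ) * 1) := by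
    rw [← c12_zsmul_right]
    congr 1
    push_cast
    rw [mul_one, ← hnum]
  have h3 : c12 (a / c.den) ((c.num : ℚ) * 1) = c12 (a / c.den) 1 ^ (c.num : ℤ) := by
    rw [← c12_zsmul_right]
  have h4 : c12 (a / c.den) 1 ^ (c.num : ℤ) = c12 ((c.num : ℚ) * (a / c.den)) 1 := by
    rw [← c12_zsmul_left]
  have h5 : (c.num : ℚ) * (a / c.den) = a * c := by
    field_simp; linear_combination (-a) * hnum
  rw [h1, h2, h3, h4, h5, tH]

end Heis

section Heis2
open Multiplicative

lemma tH_comm (b : ℚ) (g : HeisPres) : tH b * g = g * tH b := c12_comm b 1 g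
lemma tH_add (u v : ℚ) : tH (u + v) = tH u * tH v := c12_add_left u v 1
lemma tH_zero : tH 0 = 1 := by rw [tH, c12, z1'_zero]; exact pComm_one_left _

lemma swap21 (n a : ℚ) : z2' n * z1' a = z1' a * z2' n * (tH (a * n))⁻¹ := by
  have h := mul_pComm (z1' a) (z2' n)
  have h2 : pComm (z1' a) (z2' n) = tH (a * n) := c12_eq_tH a n
  rw [h2] at h
  rw [h]; group

lemma exists_nf (g : HeisPres) : ∃ a c b : ℚ, g = z1' a * z2' c * tH b := by
  obtain ⟨w, rfl⟩ := QuotientGroup.mk'_surjective _ g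
  induction w using Monoid.Coprod.induction_on' with
  | one =>
    refine ⟨0, 0, 0, ?_⟩
    rw [z1'_zero, z2'_zero, tH_zero, _root_.map_one]
    simp
  | inl_mul m x ih =>
    obtain ⟨a, c, b, h⟩ := ih
    refine ⟨toAdd m + a, c, b, ?_⟩
    rw [_root_.map_mul, h]
    have hm : (QuotientGroup.mk' (Subgroup.normalClosure relsHeis)) (Monoid.Coprod.inl m)
        = z1' (toAdd m) := rfl
    rw [hm, z1'_add]
    simp only [mul_assoc]
  | inr_mul n x ih =>
    obtain ⟨a, c, b, h⟩ := ih
    refine ⟨a, toAdd n + c, b - a * toAdd n, ?_⟩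
    rw [_root_.map_mul, h]
    have hm : (QuotientGroup.mk' (Subgroup.normalClosure relsHeis)) (Monoid.Coprod.inr n)
        = z2' (toAdd n) := rfl
    rw [hm]
    have teq : tH (b - a * toAdd n) = (tH (a * toAdd n))⁻¹ * tH b := by
      have h3 := tH_add (a * toAdd n) (b - a * toAdd n)
      rw [show a * toAdd n + (b - a * toAdd n) = b by ring] at h3
      exact eq_inv_mul_of_mul_eq h3.symm
    have hcomm : (tH (a * toAdd n))⁻¹ * z2' c = z2' c * (tH (a * toAdd n))⁻¹ := by
      have hc : Commute (tH (a * toAdd n)) (z2' c) := tH_comm _ _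
      exact hc.inv_left.eq
    calc z2' (toAdd n) * (z1' a * z2' c * tH b)
        = (z2' (toAdd n) * z1' a) * z2' c * tH b := by simp only [mul_assoc]
      _ = (z1' a * z2' (toAdd n) * (tH (a * toAdd n))⁻¹) * z2' c * tH b := by rw [swap21]
      _ = z1' a * z2' (toAdd n + c) * tH (b - a * toAdd n) := by
          rw [z2'_add, teq, mul_assoc (z1' a * z2' (toAdd n)), hcomm]
          simp only [mul_assoc]

lemma U_std1 (a : ℚ) :
    (1 : Matrix (Fin 3) (Fin 3) ℚ) + Matrix.single 0 1 a = U a 0 0 := by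
  ext i j
  fin_cases i <;> fin_cases j <;>
    simp [U, Matrix.single, Matrix.one_apply, Matrix.vecHead, Matrix.vecTail]

lemma U_std2 (a : ℚ) :
    (1 : Matrix (Fin 3) (Fin 3) ℚ) + Matrix.single 1 2 a = U 0 a 0 := by
  ext i j
  fin_cases i <;> fin_cases j <;>
    simp [U, Matrix.single, Matrix.one_apply, Matrix.vecHead, Matrix.vecTail]

lemma isTheta_z1 {θ : HeisPres →* Matrix.SpecialLinearGroup (Fin 3) ℚ}
    (hθ : IsTheta θ) (a : ℚ) : θ (z1' a) = sU a 0 0 :=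
  Subtype.ext (by rw [z1']; rw [hθ.1 a, U_std1]; rfl)

lemma isTheta_z2 {θ : HeisPres →* Matrix.SpecialLinearGroup (Fin 3) ℚ}
    (hθ : IsTheta θ) (a : ℚ) : θ (z2' a) = sU 0 a 0 :=
  Subtype.ext (by rw [z2']; rw [hθ.2 a, U_std2]; rfl)

lemma isTheta_tH {θ : HeisPres →* Matrix.SpecialLinearGroup (Fin 3) ℚ}
    (hθ : IsTheta θ) (b : ℚ) : θ (tH b) = sU 0 0 b := by
  rw [tH, c12, map_pComm_s11, isTheta_z1 hθ, isTheta_z2 hθ, pComm_sU]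
  exact sU_congr rfl rfl (by ring)

lemma isTheta_nf {θ : HeisPres →* Matrix.SpecialLinearGroup (Fin 3) ℚ}
    (hθ : IsTheta θ) (a c b : ℚ) :
    θ (z1' a * z2' c * tH b) = sU a c (b + a * c) := by
  rw [_root_.map_mul, _root_.map_mul, isTheta_z1 hθ, isTheta_z2 hθ, isTheta_tH hθ,
    sU_mul, sU_mul]
  exact sU_congr (by ring) (by ring) (by ring)

end Heis2

section Theta
open Multiplicative

def θ₀ : FreeProdQ2 →* Matrix.SpecialLinearGroup (Fin 3) ℚ := Monoid.Coprod.lift S1 S2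

lemma θ₀_y1 (x : Multiplicative ℚ) : θ₀ (y1 x) = sU (toAdd x) 0 0 := by
  rw [θ₀, y1, Monoid.Coprod.lift_apply_inl]; rfl

lemma θ₀_y2 (x : Multiplicative ℚ) : θ₀ (y2 x) = sU 0 (toAdd x) 0 := by
  rw [θ₀, y2, Monoid.Coprod.lift_apply_inr]; rfl

lemma θ₀_rels : relsHeis ⊆ (θ₀.ker : Set FreeProdQ2) := by
  rintro g ⟨a, b, c, (rfl | rfl)⟩
  · show θ₀ _ = 1
    rw [map_pComm_s11, map_pComm_s11, θ₀_y1, θ₀_y1, θ₀_y2, pComm_sU, pComm_sU]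
    exact (sU_congr rfl rfl (by ring)).trans sU_one
  · show θ₀ _ = 1
    rw [map_pComm_s11, map_pComm_s11, θ₀_y2, θ₀_y2, θ₀_y1, pComm_sU, pComm_sU]
    exact (sU_congr rfl rfl (by ring)).trans sU_one

lemma ncl_le_ker : Subgroup.normalClosure relsHeis ≤ θ₀.ker :=
  Subgroup.normalClosure_le_normal (N := θ₀.ker) θ₀_rels

def θhat : HeisPres →* Matrix.SpecialLinearGroup (Fin 3) ℚ :=
  QuotientGroup.lift (Subgroup.normalClosure relsHeis) θ₀
    (fun g hg => MonoidHom.mem_ker.1 (ncl_le_ker hg))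

lemma isTheta_θhat : IsTheta θhat := by
  constructor
  · intro a
    have h : θhat (z1 (ofAdd a)) = θ₀ (y1 (ofAdd a)) := rfl
    rw [h, θ₀_y1]
    show U a 0 0 = _
    exact (U_std1 a).symm
  · intro a
    have h : θhat (z2 (ofAdd a)) = θ₀ (y2 (ofAdd a)) := rfl
    rw [h, θ₀_y2]
    show U 0 a 0 = _
    exact (U_std2 a).symm

lemma theta_unique {θ θ' : HeisPres →* Matrix.SpecialLinearGroup (Fin 3) ℚ}
    (hθ : IsTheta θ) (hθ' : IsTheta θ') : θ = θ' := by
  apply MonoidHom.ext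
  intro g
  obtain ⟨w, rfl⟩ := QuotientGroup.mk'_surjective (Subgroup.normalClosure relsHeis) g
  induction w using Monoid.Coprod.induction_on with
  | inl m =>
    show θ (z1' (toAdd m)) = θ' (z1' (toAdd m))
    rw [isTheta_z1 hθ, isTheta_z1 hθ']
  | inr n =>
    show θ (z2' (toAdd n)) = θ' (z2' (toAdd n))
    rw [isTheta_z2 hθ, isTheta_z2 hθ']
  | mul x y hx hy =>
    simp only [_root_.map_mul, hx, hy]

end Theta

/-- The unique homomorphism `θ : G'' → SL₃(ℚ)` with
`θ(x₁(a)) = 1 + a·E₁₂` and `θ(x₂(a)) = 1 + a·E₂₃` is injective, and its image is the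
group of upper unitriangular `3 × 3` rational matrices (the Heisenberg group over ℚ). -/
theorem heisenberg_presentation_injective :
    (∃! θ : HeisPres →* Matrix.SpecialLinearGroup (Fin 3) ℚ, IsTheta θ) ∧
    (∀ θ : HeisPres →* Matrix.SpecialLinearGroup (Fin 3) ℚ, IsTheta θ →
      Function.Injective θ ∧
      ∀ M : Matrix.SpecialLinearGroup (Fin 3) ℚ,
        M ∈ θ.range ↔
          ((M : Matrix (Fin 3) (Fin 3) ℚ) 1 0 = 0 ∧
           (M : Matrix (Fin 3) (Fin 3) ℚ) 2 0 = 0 ∧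
           (M : Matrix (Fin 3) (Fin 3) ℚ) 2 1 = 0 ∧
           (M : Matrix (Fin 3) (Fin 3) ℚ) 0 0 = 1 ∧
           (M : Matrix (Fin 3) (Fin 3) ℚ) 1 1 = 1 ∧
           (M : Matrix (Fin 3) (Fin 3) ℚ) 2 2 = 1)) := by
  constructor
  · exact ⟨θhat, isTheta_θhat, fun θ' h' => theta_unique h' isTheta_θhat⟩
  · intro θ hθ
    constructor
    · rw [injective_iff_map_eq_one]
      intro g hg
      obtain ⟨a, c, b, rfl⟩ := exists_nf g
      rw [isTheta_nf hθ] at hg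
      have hm : U a c (b + a * c) = (1 : Matrix (Fin 3) (Fin 3) ℚ) := by
        have h2 := congrArg Subtype.val hg
        simpa [sU] using h2
      have ha : a = 0 := by
        have h3 := congrFun (congrFun hm 0) 1
        simpa [U, Matrix.one_apply] using h3
      have hc : c = 0 := by
        have h3 := congrFun (congrFun hm 1) 2
        simpa [U, Matrix.one_apply, Matrix.vecHead, Matrix.vecTail] using h3
      have hb : b + a * c = 0 := by
        have h3 := congrFun (congrFun hm 0) 2
        simpa [U, Matrix.one_apply, Matrix.vecHead, Matrix.vecTail] using h3
      subst ha; subst hc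
      rw [mul_zero, add_zero] at hb
      subst hb
      rw [z1'_zero, z2'_zero, tH_zero]
      simp
    · intro M
      constructor
      · rintro ⟨g, rfl⟩
        obtain ⟨a, c, b, rfl⟩ := exists_nf g
        rw [isTheta_nf hθ]
        refine ⟨?_, ?_, ?_, ?_, ?_, ?_⟩ <;>
          simp [sU, U, Matrix.vecHead, Matrix.vecTail]
      · rintro ⟨h10, h20, h21, h00, h11, h22⟩
        set p := (M : Matrix (Fin 3) (Fin 3) ℚ) 0 1 with hp
        set q := (M : Matrix (Fin 3) (Fin 3) ℚ) 1 2 with hq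
        set r := (M : Matrix (Fin 3) (Fin 3) ℚ) 0 2 with hr
        refine ⟨z1' p * z2' q * tH (r - p * q), ?_⟩
        rw [isTheta_nf hθ]
        apply Subtype.ext
        show U p q (r - p * q + p * q) = (M : Matrix (Fin 3) (Fin 3) ℚ)
        rw [show r - p * q + p * q = r by ring]
        ext i j
        fin_cases i <;> fin_cases j <;>
          simp [U, Matrix.vecHead, Matrix.vecTail, h10, h20, h21, h00, h11, h22, hp, hq, hr]
end General
end

section
/- Let K be a commutative ring, let G be a group, and let x_α, x_β, x_{α+β}, x_{2α+β} : (K,+) → G be group homomorphisms satisfying, for all a, b ∈ K: (i) x_β(b)x_α(a) = x_α(a)x_β(b)x_{α+β}(ab)x_{2α+β}(a²b); (ii) x_{α+β}(b)x_α(a) = x_α(a)x_{α+β}(b)x_{2α+β}(2ab); and (iii) the pairs of subgroups x_{2α+β}(K) and x_α(K), x_{α+β}(K) and x_β(K), x_{2α+β}(K) and x_β(K), x_{2α+β}(K) and x_{α+β}(K) commute elementwise. (These are the defining commutator relations of the unipotent group of type B₂ over K, with α the short simple root.) Then for every n ≥ 1 and all a₁, …, a_n, b₁, …, b_n ∈ K,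 setting A_i := a₁ + ⋯ + a_i, B_n := Σ_{i=1}^n b_i, R_n := Σ_{i=1}^n b_i·A_i and S_n := Σ_{i=1}^n b_i·A_i², one has x_β(b_n)x_α(a_n) ⋯ x_β(b₁)x_α(a₁) = x_α(A_n) · x_β(B_n) · x_{α+β}(R_n) · x_{2α+β}(S_n). -/
/-!
Multiplying the normal form `x_α(A) x_β(B) x_{α+β}(R) x_{2α+β}(S)` on the left by
`x_β(b) x_α(a)` merges `x_α(a) x_α(A)`, and one use of relation (i) moves `x_β(b)` past
`x_α(A + a)` at the cost of `x_{α+β}((A + a) b) x_{2α+β}((A + a)² b)`. These new factors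
commute past `x_β(B)` and `x_{α+β}(R)`, giving the normal form with `A, B, R, S` increased
by `a`, `b`, `b (A + a)` and `b (A + a)²`; induction on `n` finishes.
-/

open Multiplicative

theorem List.prod_map_range_succ_sub {M : Type*} [Monoid M] (f : ℕ → M) (n : ℕ) :
    ((List.range (n + 1)).map fun i => f (n + 1 - i)).prod
      = f (n + 1) * ((List.range n).map fun i => f (n - i)).prod := by
  simp [List.range_succ_eq_map, Function.comp_def]

section UnipotentB2

variable {K G : Type*} [CommRing K] [Group G] {xa xb xab x2ab : Multiplicative K →* G}

theorem unipotentB2_mul_normal_form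
    (R1 : ∀ a b : K,
      xb (ofAdd b) * xa (ofAdd a) =
      xa (ofAdd a) * xb (ofAdd b) * xab (ofAdd (a * b)) * x2ab (ofAdd (a ^ 2 * b)))
    (C2 : ∀ a b : K, Commute (xab (ofAdd a)) (xb (ofAdd b)))
    (C3 : ∀ a b : K, Commute (x2ab (ofAdd a)) (xb (ofAdd b)))
    (C4 : ∀ a b : K, Commute (x2ab (ofAdd a)) (xab (ofAdd b)))
    (a b A B R S : K) :
    xb (ofAdd b) * xa (ofAdd a) * (xa (ofAdd A) * xb (ofAdd B) * xab (ofAdd R) * x2ab (ofAdd S))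
      = xa (ofAdd (A + a)) * xb (ofAdd (B + b)) * xab (ofAdd (R + b * (A + a)))
          * x2ab (ofAdd (S + b * (A + a) ^ 2)) := by
  have hR : R + b * (A + a) = (A + a) * b + R := by ring
  have hS : S + b * (A + a) ^ 2 = (A + a) ^ 2 * b + S := by ring
  have map_ofAdd_add (f : Multiplicative K →* G) (s t : K) : f (ofAdd (s + t)) = f (ofAdd s) * f (ofAdd t) :=
    map_mul f _ _
  rw [hR, hS, add_comm B, map_ofAdd_add xb, map_ofAdd_add xab, map_ofAdd_add x2ab]
  simp only [mul_assoc]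
  rw [← mul_assoc (xa _), ← map_ofAdd_add, add_comm a A, ← mul_assoc (xb _), R1]
  simp only [mul_assoc]
  rw [(C3 _ B).left_comm, (C2 _ B).left_comm, (C4 _ R).left_comm]

end UnipotentB2

theorem unipotent_B2_normal_form_general
    (K : Type*) [CommRing K] {G : Type*} [Group G]
    (xa xb xab x2ab : Multiplicative K →* G)
    (R1 : ∀ a b : K,
      xb (Multiplicative.ofAdd b) * xa (Multiplicative.ofAdd a) =
      xa (Multiplicative.ofAdd a) * xb (Multiplicative.ofAdd b) *
        xab (Multiplicative.ofAdd (a * b)) * x2ab (Multiplicative.ofAdd (a ^ 2 * b)))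
    (C2 : ∀ a b : K, Commute (xab (Multiplicative.ofAdd a)) (xb (Multiplicative.ofAdd b)))
    (C3 : ∀ a b : K, Commute (x2ab (Multiplicative.ofAdd a)) (xb (Multiplicative.ofAdd b)))
    (C4 : ∀ a b : K, Commute (x2ab (Multiplicative.ofAdd a)) (xab (Multiplicative.ofAdd b)))
    (n : ℕ) (a b : ℕ → K) :
    ((List.range n).map (fun i =>
        xb (Multiplicative.ofAdd (b (n - i))) * xa (Multiplicative.ofAdd (a (n - i))))).prod
      =
      xa (Multiplicative.ofAdd (∑ k ∈ Finset.Icc 1 n, a k)) *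
      xb (Multiplicative.ofAdd (∑ k ∈ Finset.Icc 1 n, b k)) *
      xab (Multiplicative.ofAdd
        (∑ i ∈ Finset.Icc 1 n, b i * ∑ k ∈ Finset.Icc 1 i, a k)) *
      x2ab (Multiplicative.ofAdd
        (∑ i ∈ Finset.Icc 1 n, b i * (∑ k ∈ Finset.Icc 1 i, a k) ^ 2)) := by
  induction n with
  | zero => simp
  | succ n ih =>
    have hn : 1 ≤ n + 1 := Nat.le_add_left 1 n
    rw [List.prod_map_range_succ_sub (fun i => xb (ofAdd (b i)) * xa (ofAdd (a i))), ih,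
      unipotentB2_mul_normal_form R1 C2 C3 C4]
    simp only [Finset.sum_Icc_succ_top hn]

/-- Normal form in the unipotent group of type `B₂` over a commutative
ring `K` (with `α` the short simple root): given one-parameter subgroups
`x_α, x_β, x_{α+β}, x_{2α+β}` of a group `G` satisfying the defining commutator
relations of type `B₂`, one has
`x_β(bₙ)x_α(aₙ) ⋯ x_β(b₁)x_α(a₁) = x_α(Aₙ) x_β(Bₙ) x_{α+β}(Rₙ) x_{2α+β}(Sₙ)` where
`Aᵢ = a₁ + ⋯ + aᵢ`, `Bₙ = Σ bᵢ`, `Rₙ = Σ bᵢAᵢ` and `Sₙ = Σ bᵢAᵢ²`. -/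
theorem unipotent_B2_normal_form
    (K : Type*) [CommRing K] {G : Type*} [Group G]
    (xa xb xab x2ab : Multiplicative K →* G)
    (R1 : ∀ a b : K,
      xb (Multiplicative.ofAdd b) * xa (Multiplicative.ofAdd a) =
      xa (Multiplicative.ofAdd a) * xb (Multiplicative.ofAdd b) *
        xab (Multiplicative.ofAdd (a * b)) * x2ab (Multiplicative.ofAdd (a ^ 2 * b)))
    (R2 : ∀ a b : K,
      xab (Multiplicative.ofAdd b) * xa (Multiplicative.ofAdd a) =
      xa (Multiplicative.ofAdd a) * xab (Multiplicative.ofAdd b) *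
        x2ab (Multiplicative.ofAdd (2 * a * b)))
    (C1 : ∀ a b : K, Commute (x2ab (Multiplicative.ofAdd a)) (xa (Multiplicative.ofAdd b)))
    (C2 : ∀ a b : K, Commute (xab (Multiplicative.ofAdd a)) (xb (Multiplicative.ofAdd b)))
    (C3 : ∀ a b : K, Commute (x2ab (Multiplicative.ofAdd a)) (xb (Multiplicative.ofAdd b)))
    (C4 : ∀ a b : K, Commute (x2ab (Multiplicative.ofAdd a)) (xab (Multiplicative.ofAdd b)))
    (n : ℕ) (hn : 1 ≤ n) (a b : ℕ → K) :
    ((List.range n).map (fun i =>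
        xb (Multiplicative.ofAdd (b (n - i))) * xa (Multiplicative.ofAdd (a (n - i))))).prod
      =
      xa (Multiplicative.ofAdd (∑ k ∈ Finset.Icc 1 n, a k)) *
      xb (Multiplicative.ofAdd (∑ k ∈ Finset.Icc 1 n, b k)) *
      xab (Multiplicative.ofAdd
        (∑ i ∈ Finset.Icc 1 n, b i * ∑ k ∈ Finset.Icc 1 i, a k)) *
      x2ab (Multiplicative.ofAdd
        (∑ i ∈ Finset.Icc 1 n, b i * (∑ k ∈ Finset.Icc 1 i, a k) ^ 2)) :=
  unipotent_B2_normal_form_general K xa xb xab x2ab R1 C2 C3 C4 n a b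
end

section
/- Let K be a commutative ring, let G be a group, and let x_α, x_β, x_{α+β}, x_{2α+β}, x_{3α+β}, x_{3α+2β} : (K,+) → G be group homomorphisms satisfying, for all a, b ∈ K: (R1) x_β(b)x_α(a) = x_α(a)x_β(b)x_{α+β}(ab)x_{2α+β}(a²b)x_{3α+β}(a³b)x_{3α+2β}(a³b²); (R2) x_{α+β}(b)x_α(a) = x_α(a)x_{α+β}(b)x_{2α+β}(2ab)x_{3α+β}(3a²b)x_{3α+2β}(3ab²); (R3) x_{2α+β}(b)x_α(a) = x_α(a)x_{2α+β}(b)x_{3α+2β}(3ab); (R4) x_{3α+β}(b)x_β(a) = x_β(a)x_{3α+β}(b)x_{3α+2β}(−ab); (R5) x_{2α+β}(b)x_{α+β}(a) = x_{α+β}(a)x_{2α+β}(b)x_{3α+2β}(3ab); and each of the remaining ten pairs among these six one-parameter subgroups commutes elementwise (namely the pairs {x_α, x_{3α+β}}, {x_α, x_{3α+2β}}, {x_β, x_{α+β}}, {x_β, x_{2α+β}}, {x_β, x_{3α+2β}}, {x_{α+β}, x_{3α+β}}, {x_{α+β}, x_{3α+2β}}, {x_{2α+β}, x_{3α+β}},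 {x_{2α+β}, x_{3α+2β}}, {x_{3α+β}, x_{3α+2β}}). (These are the defining commutator relations of the unipotent group of type G₂ over K, with α the short simple root.) Then for every n ≥ 1 and all a₁, …, a_n, b₁, …, b_n ∈ K, setting A_i := a₁ + ⋯ + a_i, B_i := b₁ + ⋯ + b_i, R_i := Σ_{k=1}^i b_k·A_k, S_n := Σ_{i=1}^n b_i·A_i², T_n := Σ_{i=1}^n b_i·A_i³ and U_n := Σ_{i=1}^n b_i²·A_i³ − Σ_{i=1}^n b_i·A_i³·B_{i−1} + 3·Σ_{i=1}^n b_i·A_i²·R_{i−1} (with B₀ = R₀ = 0), one has x_β(b_n)x_α(a_n) ⋯ x_β(b₁)x_α(a₁) = x_α(A_n) · x_β(B_n) · x_{α+β}(R_n) · x_{2α+β}(S_n) · x_{3α+β}(T_n) · x_{3α+2β}(U_n). -/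
/-- Partial sums `A_i = a₁ + ⋯ + a_i`. -/
def psum {K : Type*} [CommRing K] (a : ℕ → K) (i : ℕ) : K := ∑ k ∈ Finset.Icc 1 i, a k

/-!
Multiplying the normal form `x_α(A) x_β(B) x_{α+β}(R) x_{2α+β}(S) x_{3α+β}(T) x_{3α+2β}(U)`
on the left by `x_β(b) x_α(a)` gives again a word in normal form: `x_α(a)` merges with `x_α(A)`,
relation (R1) moves `x_α(a + A)` past `x_β(b)`, and the resulting factors are sorted by letting
`x_β(B)`, `x_{α+β}(R)`, `x_{2α+β}(S)` and `x_{3α+β}(T)` pass leftwards through the higher root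
subgroups, using (R4), (R5) and the commutations. The new coordinates satisfy the recurrences
defining `Aₙ, Bₙ, Rₙ, Sₙ, Tₙ, Uₙ`, so the theorem follows by induction on `n`.
-/

open Multiplicative

theorem map_ofAdd_mul_map_ofAdd_mul {K G : Type*} [AddZeroClass K] [Monoid G]
    (f : Multiplicative K →* G) (u v : K) (g : G) :
    f (ofAdd u) * (f (ofAdd v) * g) = f (ofAdd (u + v)) * g := by
  rw [← mul_assoc, ← map_mul, ← ofAdd_add]

theorem mul_left_comm_of_mul_eq {G : Type*} [Semigroup G] {x y z : G} (h : x * y = y * x * z)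
    (g : G) : x * (y * g) = y * (x * (z * g)) := by
  rw [← mul_assoc, h, mul_assoc, mul_assoc]

namespace UnipotentG2

section Word

variable {K G : Type*} [Ring K] [Monoid G] (xa xb xab x2ab x3ab x3a2b : Multiplicative K →* G)

def normalForm (A B R S T U : K) : G :=
  xa (ofAdd A) * xb (ofAdd B) * xab (ofAdd R) * x2ab (ofAdd S) * x3ab (ofAdd T) * x3a2b (ofAdd U)

theorem tail_mul_xb
    (R4 : ∀ a b : K,
      x3ab (ofAdd b) * xb (ofAdd a) = xb (ofAdd a) * x3ab (ofAdd b) * x3a2b (ofAdd (-(a * b))))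
    (C3 : ∀ a b : K, Commute (xb (ofAdd a)) (xab (ofAdd b)))
    (C4 : ∀ a b : K, Commute (xb (ofAdd a)) (x2ab (ofAdd b)))
    (C5 : ∀ a b : K, Commute (xb (ofAdd a)) (x3a2b (ofAdd b)))
    (B r s t u : K) (g : G) :
    xab (ofAdd r) * (x2ab (ofAdd s) * (x3ab (ofAdd t) * (x3a2b (ofAdd u) * (xb (ofAdd B) * g)))) =
      xb (ofAdd B) * (xab (ofAdd r) * (x2ab (ofAdd s) * (x3ab (ofAdd t) *
        (x3a2b (ofAdd (u - B * t)) * g)))) := by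
  rw [(C5 B u).symm.left_comm, mul_left_comm_of_mul_eq (R4 B t), (C4 B s).symm.left_comm,
    (C3 B r).symm.left_comm, map_ofAdd_mul_map_ofAdd_mul, neg_add_eq_sub]

theorem tail_mul_xab
    (R5 : ∀ a b : K,
      x2ab (ofAdd b) * xab (ofAdd a) = xab (ofAdd a) * x2ab (ofAdd b) * x3a2b (ofAdd (3 * a * b)))
    (C6 : ∀ a b : K, Commute (xab (ofAdd a)) (x3ab (ofAdd b)))
    (C7 : ∀ a b : K, Commute (xab (ofAdd a)) (x3a2b (ofAdd b)))
    (C10 : ∀ a b : K, Commute (x3ab (ofAdd a)) (x3a2b (ofAdd b)))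
    (R s t u : K) (g : G) :
    x2ab (ofAdd s) * (x3ab (ofAdd t) * (x3a2b (ofAdd u) * (xab (ofAdd R) * g))) =
      xab (ofAdd R) * (x2ab (ofAdd s) * (x3ab (ofAdd t) *
        (x3a2b (ofAdd (u + 3 * R * s)) * g))) := by
  rw [(C7 R u).symm.left_comm, (C6 R t).symm.left_comm, mul_left_comm_of_mul_eq (R5 R s),
    (C10 t (3 * R * s)).symm.left_comm, map_ofAdd_mul_map_ofAdd_mul, add_comm]

theorem xb_mul_xa_mul_normalForm
    (R1 : ∀ a b : K,
      xb (ofAdd b) * xa (ofAdd a) =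
      xa (ofAdd a) * xb (ofAdd b) * xab (ofAdd (a * b)) * x2ab (ofAdd (a ^ 2 * b)) *
        x3ab (ofAdd (a ^ 3 * b)) * x3a2b (ofAdd (a ^ 3 * b ^ 2)))
    (R4 : ∀ a b : K,
      x3ab (ofAdd b) * xb (ofAdd a) = xb (ofAdd a) * x3ab (ofAdd b) * x3a2b (ofAdd (-(a * b))))
    (R5 : ∀ a b : K,
      x2ab (ofAdd b) * xab (ofAdd a) = xab (ofAdd a) * x2ab (ofAdd b) * x3a2b (ofAdd (3 * a * b)))
    (C3 : ∀ a b : K, Commute (xb (ofAdd a)) (xab (ofAdd b)))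
    (C4 : ∀ a b : K, Commute (xb (ofAdd a)) (x2ab (ofAdd b)))
    (C5 : ∀ a b : K, Commute (xb (ofAdd a)) (x3a2b (ofAdd b)))
    (C6 : ∀ a b : K, Commute (xab (ofAdd a)) (x3ab (ofAdd b)))
    (C7 : ∀ a b : K, Commute (xab (ofAdd a)) (x3a2b (ofAdd b)))
    (C8 : ∀ a b : K, Commute (x2ab (ofAdd a)) (x3ab (ofAdd b)))
    (C9 : ∀ a b : K, Commute (x2ab (ofAdd a)) (x3a2b (ofAdd b)))
    (C10 : ∀ a b : K, Commute (x3ab (ofAdd a)) (x3a2b (ofAdd b)))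
    (a b A B R S T U : K) :
    xb (ofAdd b) * xa (ofAdd a) * normalForm xa xb xab x2ab x3ab x3a2b A B R S T U =
      normalForm xa xb xab x2ab x3ab x3a2b (a + A) (b + B) ((a + A) * b + R) ((a + A) ^ 2 * b + S)
        ((a + A) ^ 3 * b + T)
        ((a + A) ^ 3 * b ^ 2 - B * ((a + A) ^ 3 * b) + 3 * R * ((a + A) ^ 2 * b) + U) := by
  simp only [normalForm, mul_assoc]
  rw [map_ofAdd_mul_map_ofAdd_mul, ← mul_assoc, R1]
  simp only [mul_assoc]
  rw [tail_mul_xb xb xab x2ab x3ab x3a2b R4 C3 C4 C5, map_ofAdd_mul_map_ofAdd_mul,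
    tail_mul_xab xab x2ab x3ab x3a2b R5 C6 C7 C10, map_ofAdd_mul_map_ofAdd_mul,
    (C9 _ _).symm.left_comm, (C8 _ _).symm.left_comm, map_ofAdd_mul_map_ofAdd_mul,
    (C10 _ _).symm.left_comm, map_ofAdd_mul_map_ofAdd_mul, ← map_mul, ← ofAdd_add]
  simp only [mul_assoc]

end Word

section Coordinates

variable {K : Type*} [CommRing K] (a b : ℕ → K)

def rCoord (n : ℕ) : K := ∑ i ∈ Finset.Icc 1 n, b i * psum a i

def sCoord (n : ℕ) : K := ∑ i ∈ Finset.Icc 1 n, b i * psum a i ^ 2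

def tCoord (n : ℕ) : K := ∑ i ∈ Finset.Icc 1 n, b i * psum a i ^ 3

def uCoord (n : ℕ) : K :=
  (∑ i ∈ Finset.Icc 1 n, b i ^ 2 * psum a i ^ 3) -
    (∑ i ∈ Finset.Icc 1 n, b i * psum a i ^ 3 * psum b (i - 1)) +
    3 * ∑ i ∈ Finset.Icc 1 n, b i * psum a i ^ 2 * rCoord a b (i - 1)

theorem psum_succ (n : ℕ) : psum a (n + 1) = psum a n + a (n + 1) :=
  Finset.sum_Icc_succ_top (Nat.le_add_left 1 n) a

theorem rCoord_succ (n : ℕ) : rCoord a b (n + 1) = rCoord a b n + b (n + 1) * psum a (n + 1) :=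
  Finset.sum_Icc_succ_top (Nat.le_add_left 1 n) _

theorem sCoord_succ (n : ℕ) :
    sCoord a b (n + 1) = sCoord a b n + b (n + 1) * psum a (n + 1) ^ 2 :=
  Finset.sum_Icc_succ_top (Nat.le_add_left 1 n) _

theorem tCoord_succ (n : ℕ) :
    tCoord a b (n + 1) = tCoord a b n + b (n + 1) * psum a (n + 1) ^ 3 :=
  Finset.sum_Icc_succ_top (Nat.le_add_left 1 n) _

theorem uCoord_succ (n : ℕ) :
    uCoord a b (n + 1) = uCoord a b n + b (n + 1) ^ 2 * psum a (n + 1) ^ 3 -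
      b (n + 1) * psum a (n + 1) ^ 3 * psum b n +
      3 * b (n + 1) * psum a (n + 1) ^ 2 * rCoord a b n := by
  simp only [uCoord, Finset.sum_Icc_succ_top (Nat.le_add_left 1 n), Nat.add_sub_cancel]
  ring

end Coordinates

end UnipotentG2

open UnipotentG2 in
theorem unipotent_G2_normal_form_general
    (K : Type*) [CommRing K] {G : Type*} [Group G]
    (xa xb xab x2ab x3ab x3a2b : Multiplicative K →* G)
    (R1 : ∀ a b : K,
      xb (Multiplicative.ofAdd b) * xa (Multiplicative.ofAdd a) =
      xa (Multiplicative.ofAdd a) * xb (Multiplicative.ofAdd b) *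
        xab (Multiplicative.ofAdd (a * b)) * x2ab (Multiplicative.ofAdd (a ^ 2 * b)) *
        x3ab (Multiplicative.ofAdd (a ^ 3 * b)) *
        x3a2b (Multiplicative.ofAdd (a ^ 3 * b ^ 2)))
    (R4 : ∀ a b : K,
      x3ab (Multiplicative.ofAdd b) * xb (Multiplicative.ofAdd a) =
      xb (Multiplicative.ofAdd a) * x3ab (Multiplicative.ofAdd b) *
        x3a2b (Multiplicative.ofAdd (-(a * b))))
    (R5 : ∀ a b : K,
      x2ab (Multiplicative.ofAdd b) * xab (Multiplicative.ofAdd a) =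
      xab (Multiplicative.ofAdd a) * x2ab (Multiplicative.ofAdd b) *
        x3a2b (Multiplicative.ofAdd (3 * a * b)))
    (C3 : ∀ a b : K, Commute (xb (Multiplicative.ofAdd a)) (xab (Multiplicative.ofAdd b)))
    (C4 : ∀ a b : K, Commute (xb (Multiplicative.ofAdd a)) (x2ab (Multiplicative.ofAdd b)))
    (C5 : ∀ a b : K, Commute (xb (Multiplicative.ofAdd a)) (x3a2b (Multiplicative.ofAdd b)))
    (C6 : ∀ a b : K, Commute (xab (Multiplicative.ofAdd a)) (x3ab (Multiplicative.ofAdd b)))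
    (C7 : ∀ a b : K, Commute (xab (Multiplicative.ofAdd a)) (x3a2b (Multiplicative.ofAdd b)))
    (C8 : ∀ a b : K, Commute (x2ab (Multiplicative.ofAdd a)) (x3ab (Multiplicative.ofAdd b)))
    (C9 : ∀ a b : K, Commute (x2ab (Multiplicative.ofAdd a)) (x3a2b (Multiplicative.ofAdd b)))
    (C10 : ∀ a b : K, Commute (x3ab (Multiplicative.ofAdd a)) (x3a2b (Multiplicative.ofAdd b)))
    (n : ℕ) (a b : ℕ → K) :
    ((List.range n).map (fun i =>
        xb (Multiplicative.ofAdd (b (n - i))) * xa (Multiplicative.ofAdd (a (n - i))))).prod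
      =
      xa (Multiplicative.ofAdd (psum a n)) *
      xb (Multiplicative.ofAdd (psum b n)) *
      xab (Multiplicative.ofAdd (∑ i ∈ Finset.Icc 1 n, b i * psum a i)) *
      x2ab (Multiplicative.ofAdd (∑ i ∈ Finset.Icc 1 n, b i * psum a i ^ 2)) *
      x3ab (Multiplicative.ofAdd (∑ i ∈ Finset.Icc 1 n, b i * psum a i ^ 3)) *
      x3a2b (Multiplicative.ofAdd
        ((∑ i ∈ Finset.Icc 1 n, b i ^ 2 * psum a i ^ 3) -
         (∑ i ∈ Finset.Icc 1 n, b i * psum a i ^ 3 * psum b (i - 1)) +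
         3 * ∑ i ∈ Finset.Icc 1 n, b i * psum a i ^ 2 *
           (∑ k ∈ Finset.Icc 1 (i - 1), b k * psum a k))) := by
  change _ = normalForm xa xb xab x2ab x3ab x3a2b (psum a n) (psum b n) (rCoord a b n)
    (sCoord a b n) (tCoord a b n) (uCoord a b n)
  induction n with
  | zero => simp [normalForm, psum, rCoord, sCoord, tCoord, uCoord]
  | succ n ih =>
    rw [List.prod_range_succ']
    simp only [Nat.sub_zero, Nat.succ_sub_succ]
    rw [ih, xb_mul_xa_mul_normalForm xa xb xab x2ab x3ab x3a2b R1 R4 R5 C3 C4 C5 C6 C7 C8 C9 C10,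
      uCoord_succ, rCoord_succ, sCoord_succ, tCoord_succ, psum_succ a, psum_succ b]
    congr 1 <;> ring

/-- Normal form in the unipotent group of type `G₂` over a commutative
ring `K` (with `α` the short simple root): given one-parameter subgroups
`x_α, x_β, x_{α+β}, x_{2α+β}, x_{3α+β}, x_{3α+2β}` of a group `G` satisfying the defining
commutator relations of type `G₂`, one has
`x_β(bₙ)x_α(aₙ) ⋯ x_β(b₁)x_α(a₁)
  = x_α(Aₙ) x_β(Bₙ) x_{α+β}(Rₙ) x_{2α+β}(Sₙ) x_{3α+β}(Tₙ) x_{3α+2β}(Uₙ)`. -/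
theorem unipotent_G2_normal_form
    (K : Type*) [CommRing K] {G : Type*} [Group G]
    (xa xb xab x2ab x3ab x3a2b : Multiplicative K →* G)
    (R1 : ∀ a b : K,
      xb (Multiplicative.ofAdd b) * xa (Multiplicative.ofAdd a) =
      xa (Multiplicative.ofAdd a) * xb (Multiplicative.ofAdd b) *
        xab (Multiplicative.ofAdd (a * b)) * x2ab (Multiplicative.ofAdd (a ^ 2 * b)) *
        x3ab (Multiplicative.ofAdd (a ^ 3 * b)) *
        x3a2b (Multiplicative.ofAdd (a ^ 3 * b ^ 2)))
    (R2 : ∀ a b : K,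
      xab (Multiplicative.ofAdd b) * xa (Multiplicative.ofAdd a) =
      xa (Multiplicative.ofAdd a) * xab (Multiplicative.ofAdd b) *
        x2ab (Multiplicative.ofAdd (2 * a * b)) *
        x3ab (Multiplicative.ofAdd (3 * a ^ 2 * b)) *
        x3a2b (Multiplicative.ofAdd (3 * a * b ^ 2)))
    (R3 : ∀ a b : K,
      x2ab (Multiplicative.ofAdd b) * xa (Multiplicative.ofAdd a) =
      xa (Multiplicative.ofAdd a) * x2ab (Multiplicative.ofAdd b) *
        x3a2b (Multiplicative.ofAdd (3 * a * b)))
    (R4 : ∀ a b : K,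
      x3ab (Multiplicative.ofAdd b) * xb (Multiplicative.ofAdd a) =
      xb (Multiplicative.ofAdd a) * x3ab (Multiplicative.ofAdd b) *
        x3a2b (Multiplicative.ofAdd (-(a * b))))
    (R5 : ∀ a b : K,
      x2ab (Multiplicative.ofAdd b) * xab (Multiplicative.ofAdd a) =
      xab (Multiplicative.ofAdd a) * x2ab (Multiplicative.ofAdd b) *
        x3a2b (Multiplicative.ofAdd (3 * a * b)))
    (C1 : ∀ a b : K, Commute (xa (Multiplicative.ofAdd a)) (x3ab (Multiplicative.ofAdd b)))
    (C2 : ∀ a b : K, Commute (xa (Multiplicative.ofAdd a)) (x3a2b (Multiplicative.ofAdd b)))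
    (C3 : ∀ a b : K, Commute (xb (Multiplicative.ofAdd a)) (xab (Multiplicative.ofAdd b)))
    (C4 : ∀ a b : K, Commute (xb (Multiplicative.ofAdd a)) (x2ab (Multiplicative.ofAdd b)))
    (C5 : ∀ a b : K, Commute (xb (Multiplicative.ofAdd a)) (x3a2b (Multiplicative.ofAdd b)))
    (C6 : ∀ a b : K, Commute (xab (Multiplicative.ofAdd a)) (x3ab (Multiplicative.ofAdd b)))
    (C7 : ∀ a b : K, Commute (xab (Multiplicative.ofAdd a)) (x3a2b (Multiplicative.ofAdd b)))
    (C8 : ∀ a b : K, Commute (x2ab (Multiplicative.ofAdd a)) (x3ab (Multiplicative.ofAdd b)))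
    (C9 : ∀ a b : K, Commute (x2ab (Multiplicative.ofAdd a)) (x3a2b (Multiplicative.ofAdd b)))
    (C10 : ∀ a b : K, Commute (x3ab (Multiplicative.ofAdd a)) (x3a2b (Multiplicative.ofAdd b)))
    (n : ℕ) (hn : 1 ≤ n) (a b : ℕ → K) :
    ((List.range n).map (fun i =>
        xb (Multiplicative.ofAdd (b (n - i))) * xa (Multiplicative.ofAdd (a (n - i))))).prod
      =
      xa (Multiplicative.ofAdd (psum a n)) *
      xb (Multiplicative.ofAdd (psum b n)) *
      xab (Multiplicative.ofAdd (∑ i ∈ Finset.Icc 1 n, b i * psum a i)) *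
      x2ab (Multiplicative.ofAdd (∑ i ∈ Finset.Icc 1 n, b i * psum a i ^ 2)) *
      x3ab (Multiplicative.ofAdd (∑ i ∈ Finset.Icc 1 n, b i * psum a i ^ 3)) *
      x3a2b (Multiplicative.ofAdd
        ((∑ i ∈ Finset.Icc 1 n, b i ^ 2 * psum a i ^ 3) -
         (∑ i ∈ Finset.Icc 1 n, b i * psum a i ^ 3 * psum b (i - 1)) +
         3 * ∑ i ∈ Finset.Icc 1 n, b i * psum a i ^ 2 *
           (∑ k ∈ Finset.Icc 1 (i - 1), b k * psum a k))) :=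
  unipotent_G2_normal_form_general K xa xb xab x2ab x3ab x3a2b R1 R4 R5 C3 C4 C5 C6 C7 C8 C9 C10 n a
    b
end
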